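/- arXiv:1607.01156 — 5 statements merged into one kernel-verified Lean document; each statement's English description precedes it below -/
import Mathlib

section
/- Assume λ₁ > 0. Then (0,0) is the only nonnegative steady state: every L-periodic C² pair (p,q) with p ≥ 0 and q ≥ 0 solving the steady system -p'' = (r_u - γ_u(p+q))p + μ(q - p), -q'' = (r_v - γ_v(p+q))q + μ(p - q) on ℝ satisfies p ≡ 0 and q ≡ 0. -/
open MeasureTheory Set intervalIntegral

private lemma contDiff_one_deriv {f : ℝ → ℝ} (hf : ContDiff ℝ 2 f) :
    ContDiff ℝ 1 (deriv f) := by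
  have h : ContDiff ℝ (1 + 1 : ℕ) f := by exact_mod_cast hf
  exact (contDiff_succ_iff_deriv.mp (by exact_mod_cast h)).2.2

private lemma deriv_per {f : ℝ → ℝ} {L : ℝ} (hf : ∀ x, f (x + L) = f x) (x : ℝ) :
    deriv f (x + L) = deriv f x := by
  have h : (fun y => f (y + L)) = f := funext hf
  rw [← deriv_comp_add_const f L x, h]

private lemma ibp {f g : ℝ → ℝ} {L : ℝ}
    (hf : ContDiff ℝ 2 f) (hg : ContDiff ℝ 2 g)
    (hfp : ∀ x, f (x + L) = f x) (hgp : ∀ x, g (x + L) = g x) :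
    ∫ x in (0:ℝ)..L, (deriv (deriv f) x * g x - f x * deriv (deriv g) x) = 0 := by
  have hf1 : ContDiff ℝ 1 (deriv f) := contDiff_one_deriv hf
  have hg1 : ContDiff ℝ 1 (deriv g) := contDiff_one_deriv hg
  have hH : ∀ x : ℝ, HasDerivAt (fun y => deriv f y * g y - f y * deriv g y)
      (deriv (deriv f) x * g x - f x * deriv (deriv g) x) x := by
    intro x
    have h1 : HasDerivAt (deriv f) (deriv (deriv f) x) x :=
      (hf1.differentiable (by norm_num) x).hasDerivAt
    have h2 : HasDerivAt g (deriv g x) x :=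
      (hg.differentiable (by norm_num) x).hasDerivAt
    have h3 : HasDerivAt f (deriv f x) x :=
      (hf.differentiable (by norm_num) x).hasDerivAt
    have h4 : HasDerivAt (deriv g) (deriv (deriv g) x) x :=
      (hg1.differentiable (by norm_num) x).hasDerivAt
    have := (h1.mul h2).sub (h3.mul h4)
    exact this.congr_deriv (by ring)
  have hint : IntervalIntegrable
      (fun x => deriv (deriv f) x * g x - f x * deriv (deriv g) x) volume 0 L :=
    (((hf1.continuous_deriv le_rfl).mul hg.continuous).sub
      (hf.continuous.mul (hg1.continuous_deriv le_rfl))).intervalIntegrable 0 L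
  rw [integral_eq_sub_of_hasDerivAt (fun x _ => hH x) hint]
  have e1 : deriv f L = deriv f 0 := by simpa using deriv_per hfp 0
  have e2 : deriv g L = deriv g 0 := by simpa using deriv_per hgp 0
  have e3 : f L = f 0 := by simpa using hfp 0
  have e4 : g L = g 0 := by simpa using hgp 0
  simp only [e1, e2, e3, e4]
  ring

private lemma zero_of_nonneg_integral_zero {f : ℝ → ℝ} {L : ℝ} (hL : 0 < L)
    (hc : Continuous f) (hnn : ∀ x, 0 ≤ f x)
    (hI : ∫ x in (0:ℝ)..L, f x = 0) :
    ∀ y ∈ Icc (0:ℝ) L, f y = 0 := by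
  intro y hy
  by_contra hne
  have hfy : 0 < f y := lt_of_le_of_ne (hnn y) (Ne.symm hne)
  have hU : IsOpen (f ⁻¹' Ioi 0) := isOpen_Ioi.preimage hc
  have hyU : y ∈ f ⁻¹' Ioi 0 := hfy
  have hycl : y ∈ closure (Ioo (0:ℝ) L) := by
    rw [closure_Ioo hL.ne]; exact hy
  obtain ⟨z, hz⟩ := mem_closure_iff.mp hycl _ hU hyU
  have hVopen : IsOpen (f ⁻¹' Ioi 0 ∩ Ioo 0 L) := hU.inter isOpen_Ioo
  have hVpos : 0 < volume (f ⁻¹' Ioi 0 ∩ Ioo 0 L) :=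
    hVopen.measure_pos volume ⟨z, hz⟩
  have hsub : f ⁻¹' Ioi 0 ∩ Ioo 0 L ⊆ Function.support f ∩ Ioc 0 L := by
    rintro w ⟨hw1, hw2⟩
    exact ⟨ne_of_gt hw1, hw2.1, hw2.2.le⟩
  have hint : IntervalIntegrable f volume 0 L := hc.intervalIntegrable 0 L
  have hae : 0 ≤ᵐ[volume.restrict (Set.uIoc (0:ℝ) L)] f :=
    Filter.Eventually.of_forall hnn
  have hpos : 0 < ∫ x in (0:ℝ)..L, f x := by
    rw [integral_pos_iff_support_of_nonneg_ae' hae hint]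
    exact ⟨hL, lt_of_lt_of_le hVpos (measure_mono hsub)⟩
  linarith [hpos, hI.le]

/-- If the principal periodic eigenvalue `lam1` is positive, then `(0,0)` is the
only nonnegative `L`-periodic steady state of the system. -/
theorem stmt0
    (L : ℝ) (hL : 0 < L)
    (ru rv γu γv μ : ℝ → ℝ)
    (hru : ContDiff ℝ (⊤ : ℕ∞) ru) (hrv : ContDiff ℝ (⊤ : ℕ∞) rv)
    (hγu : ContDiff ℝ (⊤ : ℕ∞) γu) (hγv : ContDiff ℝ (⊤ : ℕ∞) γv) (hμ : ContDiff ℝ (⊤ : ℕ∞) μ)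
    (hru_per : ∀ x, ru (x + L) = ru x) (hrv_per : ∀ x, rv (x + L) = rv x)
    (hγu_per : ∀ x, γu (x + L) = γu x) (hγv_per : ∀ x, γv (x + L) = γv x)
    (hμ_per : ∀ x, μ (x + L) = μ x)
    (hγu_pos : ∀ x, 0 < γu x) (hγv_pos : ∀ x, 0 < γv x) (hμ_pos : ∀ x, 0 < μ x)
    -- principal periodic eigenpair for `-d²/dx² - A(x)`
    (lam1 : ℝ) (φ ψ : ℝ → ℝ)
    (hφ : ContDiff ℝ 2 φ) (hψ : ContDiff ℝ 2 ψ)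
    (hφ_pos : ∀ x, 0 < φ x) (hψ_pos : ∀ x, 0 < ψ x)
    (hφ_per : ∀ x, φ (x + L) = φ x) (hψ_per : ∀ x, ψ (x + L) = ψ x)
    (hφ_eq : ∀ x, -(deriv (deriv φ) x) - (ru x - μ x) * φ x - μ x * ψ x = lam1 * φ x)
    (hψ_eq : ∀ x, -(deriv (deriv ψ) x) - (rv x - μ x) * ψ x - μ x * φ x = lam1 * ψ x)
    (hlam1 : 0 < lam1)
    -- a nonnegative L-periodic C² steady state
    (p q : ℝ → ℝ)
    (hp : ContDiff ℝ 2 p) (hq : ContDiff ℝ 2 q)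
    (hp_per : ∀ x, p (x + L) = p x) (hq_per : ∀ x, q (x + L) = q x)
    (hp_nonneg : ∀ x, 0 ≤ p x) (hq_nonneg : ∀ x, 0 ≤ q x)
    (hp_eq : ∀ x, -(deriv (deriv p) x)
        = (ru x - γu x * (p x + q x)) * p x + μ x * (q x - p x))
    (hq_eq : ∀ x, -(deriv (deriv q) x)
        = (rv x - γv x * (p x + q x)) * q x + μ x * (p x - q x)) :
    ∀ x, p x = 0 ∧ q x = 0 := by
  set F : ℝ → ℝ := fun x =>
    lam1 * (p x * φ x + q x * ψ x) + γu x * (p x + q x) * (p x * φ x)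
      + γv x * (p x + q x) * (q x * ψ x) with hFdef
  have key : ∀ x, F x =
      -((deriv (deriv φ) x * p x - φ x * deriv (deriv p) x)
        + (deriv (deriv ψ) x * q x - ψ x * deriv (deriv q) x)) := by
    intro x
    rw [hFdef]
    linear_combination (-(p x)) * hφ_eq x + (-(q x)) * hψ_eq x
      + (φ x) * hp_eq x + (ψ x) * hq_eq x
  have hφ1 := contDiff_one_deriv hφ
  have hψ1 := contDiff_one_deriv hψ
  have hp1 := contDiff_one_deriv hp
  have hq1 := contDiff_one_deriv hq
  have hint1 : IntervalIntegrable
      (fun x => deriv (deriv φ) x * p x - φ x * deriv (deriv p) x) volume 0 L :=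
    (((hφ1.continuous_deriv le_rfl).mul hp.continuous).sub
      (hφ.continuous.mul (hp1.continuous_deriv le_rfl))).intervalIntegrable 0 L
  have hint2 : IntervalIntegrable
      (fun x => deriv (deriv ψ) x * q x - ψ x * deriv (deriv q) x) volume 0 L :=
    (((hψ1.continuous_deriv le_rfl).mul hq.continuous).sub
      (hψ.continuous.mul (hq1.continuous_deriv le_rfl))).intervalIntegrable 0 L
  have hI : ∫ x in (0:ℝ)..L, F x = 0 := by
    have hcongr : ∫ x in (0:ℝ)..L, F x
        = ∫ x in (0:ℝ)..L,
            -((deriv (deriv φ) x * p x - φ x * deriv (deriv p) x)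
              + (deriv (deriv ψ) x * q x - ψ x * deriv (deriv q) x)) :=
      integral_congr fun x _ => key x
    rw [hcongr, intervalIntegral.integral_neg, integral_add hint1 hint2,
      ibp hφ hp hφ_per hp_per, ibp hψ hq hψ_per hq_per]
    norm_num
  have hFcont : Continuous F := by
    rw [hFdef]
    exact ((continuous_const.mul ((hp.continuous.mul hφ.continuous).add
        (hq.continuous.mul hψ.continuous))).add
      ((hγu.continuous.mul (hp.continuous.add hq.continuous)).mul
        (hp.continuous.mul hφ.continuous))).add
      ((hγv.continuous.mul (hp.continuous.add hq.continuous)).mul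
        (hq.continuous.mul hψ.continuous))
  have hFnn : ∀ x, 0 ≤ F x := by
    intro x
    rw [hFdef]
    have := hp_nonneg x; have := hq_nonneg x
    have := (hφ_pos x).le; have := (hψ_pos x).le
    have := (hγu_pos x).le; have := (hγv_pos x).le
    positivity
  have hFzero : ∀ y ∈ Icc (0:ℝ) L, F y = 0 :=
    zero_of_nonneg_integral_zero hL hFcont hFnn hI
  have hFper : Function.Periodic F L := by
    intro x
    simp only [hFdef, hp_per, hq_per, hφ_per, hψ_per, hγu_per, hγv_per]
  intro x
  obtain ⟨y, hy, hxy⟩ := hFper.exists_mem_Ico₀ hL x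
  have hFx : F x = 0 := by
    rw [hxy]; exact hFzero y ⟨hy.1, hy.2.le⟩
  rw [hFdef] at hFx
  simp only at hFx
  have h1 := hp_nonneg x; have h2 := hq_nonneg x
  have h3 := hφ_pos x; have h4 := hψ_pos x
  have h5 := hγu_pos x; have h6 := hγv_pos x
  have nn1 : 0 ≤ p x * φ x := mul_nonneg h1 h3.le
  have nn2 : 0 ≤ q x * ψ x := mul_nonneg h2 h4.le
  have t1 : 0 ≤ γu x * (p x + q x) * (p x * φ x) :=
    mul_nonneg (mul_nonneg h5.le (by linarith)) nn1
  have t2 : 0 ≤ γv x * (p x + q x) * (q x * ψ x) :=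
    mul_nonneg (mul_nonneg h6.le (by linarith)) nn2
  have hS : lam1 * (p x * φ x + q x * ψ x) ≤ 0 := by linarith
  have hS0 : p x * φ x + q x * ψ x = 0 := by nlinarith
  have hpφ : p x * φ x = 0 := by linarith
  have hqψ : q x * ψ x = 0 := by linarith
  constructor
  · rcases mul_eq_zero.mp hpφ with h | h
    · exact h
    · exact absurd h h3.ne'
  · rcases mul_eq_zero.mp hqψ with h | h
    · exact h
    · exact absurd h h4.ne'
end

section
/- Assume λ₁ > 0. Let (u⁰,v⁰) be nonnegative bounded functions on ℝ, and let (u,v) be a nonnegative bounded classical solution on (0,∞)×ℝ of the system ∂_t u = ∂_xx u + u(r_u - γ_u(u+v)) + μ(v - u), ∂_t v = ∂_xx v + v(r_v - γ_v(u+v)) + μ(u - v), with initial data (u⁰,v⁰). Then (u,v) goes extinct exponentially fast: there exists M > 0 such that max(sup_{x∈ℝ} u(t,x), sup_{x∈ℝ} v(t,x)) ≤ M e^{-λ₁ t} for all t > 0. -/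
open Set

/-- partial derivative in time -/
noncomputable def pdt (u : ℝ → ℝ → ℝ) (t x : ℝ) : ℝ := deriv (fun s => u s x) t

/-- second partial derivative in space -/
noncomputable def pdxx (u : ℝ → ℝ → ℝ) (t x : ℝ) : ℝ := deriv (deriv (u t)) x

open Filter

lemma left_deriv_nonneg {g : ℝ → ℝ} {g' : ℝ} {a t : ℝ} (h : HasDerivAt g g' t)
    (ha : a < t) (hmax : ∀ s ∈ Set.Icc a t, g s ≤ g t) : 0 ≤ g' := by
  have hs : Filter.Tendsto (slope g t) (nhdsWithin t (Iio t)) (nhds g') :=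
    (hasDerivAt_iff_tendsto_slope.mp h).mono_left
      (nhdsWithin_mono _ (fun s hs => ne_of_lt hs))
  refine ge_of_tendsto hs ?_
  filter_upwards [Ioo_mem_nhdsLT_of_mem ⟨ha, le_refl t⟩] with s hs'
  have h1 : g s - g t ≤ 0 := by
    have := hmax s ⟨le_of_lt hs'.1, le_of_lt hs'.2⟩; linarith
  have h2 : s - t ≤ 0 := by linarith [hs'.2]
  rw [slope_def_field]
  exact div_nonneg_of_nonpos h1 h2

lemma deriv_of_contDiff_two {h : ℝ → ℝ} (hh : ContDiff ℝ 2 h) :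
    Differentiable ℝ h ∧ Differentiable ℝ (deriv h) := by
  have h2 : (2 : WithTop ℕ∞) = 1 + 1 := by norm_num
  rw [h2, contDiff_succ_iff_deriv] at hh
  exact ⟨hh.1, hh.2.2.differentiable (by norm_num)⟩

lemma second_deriv_nonpos_of_max {h : ℝ → ℝ} (hh : ContDiff ℝ 2 h) {x₀ : ℝ}
    (hmax : ∀ x, h x ≤ h x₀) : deriv (deriv h) x₀ ≤ 0 := by
  by_contra hpos
  push_neg at hpos
  obtain ⟨hd1, hd2⟩ := deriv_of_contDiff_two hh
  have h1 : deriv h x₀ = 0 :=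
    IsLocalMax.deriv_eq_zero (Filter.Eventually.of_forall hmax)
  have hslope : Filter.Tendsto (slope (deriv h) x₀) (nhdsWithin x₀ (Ioi x₀))
      (nhds (deriv (deriv h) x₀)) :=
    (hasDerivAt_iff_tendsto_slope.mp (hd2 x₀).hasDerivAt).mono_left
      (nhdsWithin_mono _ (fun s hs => ne_of_gt hs))
  have hev : ∀ᶠ s in nhdsWithin x₀ (Ioi x₀), 0 < slope (deriv h) x₀ s :=
    hslope.eventually (eventually_gt_nhds hpos)
  obtain ⟨b, hb, hIoo⟩ := mem_nhdsGT_iff_exists_Ioo_subset.mp hev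
  have hbx : x₀ < b := hb
  have hpos' : ∀ s ∈ Ioo x₀ b, 0 < deriv h s := by
    intro s hs
    have := hIoo hs
    simp only [mem_setOf_eq, slope_def_field] at this
    rw [h1, sub_zero] at this
    have hsx : 0 < s - x₀ := by linarith [hs.1]
    have := div_pos_iff.mp this
    rcases this with ⟨h', _⟩ | ⟨_, h''⟩
    · linarith
    · linarith
  have hmono : StrictMonoOn h (Icc x₀ b) := by
    apply strictMonoOn_of_deriv_pos (convex_Icc _ _) hd1.continuous.continuousOn
    intro s hs
    rw [interior_Icc] at hs
    exact hpos' s hs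
  have hlt : h x₀ < h ((x₀ + b) / 2) := by
    apply hmono (left_mem_Icc.mpr (by linarith)) ⟨by linarith, by linarith⟩
    linarith
  exact absurd (hmax ((x₀ + b) / 2)) (not_le.mpr hlt)

lemma per_bounds {L : ℝ} (hL : 0 < L) (f : ℝ → ℝ) (hf : Continuous f)
    (hper : ∀ x, f (x + L) = f x) :
    ∃ lo hi : ℝ, (∃ x, f x = lo) ∧ (∃ x, f x = hi) ∧ ∀ x, lo ≤ f x ∧ f x ≤ hi := by
  have hcomp : IsCompact (range f) :=
    Function.Periodic.compact_of_continuous hper (ne_of_gt hL) hf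
  obtain ⟨lo, hlo⟩ := hcomp.exists_isLeast ⟨f 0, mem_range_self 0⟩
  obtain ⟨hi, hhi⟩ := hcomp.exists_isGreatest ⟨f 0, mem_range_self 0⟩
  obtain ⟨x₁, hx₁⟩ := hlo.1
  obtain ⟨x₂, hx₂⟩ := hhi.1
  exact ⟨lo, hi, ⟨x₁, hx₁⟩, ⟨x₂, hx₂⟩,
    fun x => ⟨hlo.2 (mem_range_self x), hhi.2 (mem_range_self x)⟩⟩

lemma key_lemma (r μc γc lam1 M₀ ε K t x : ℝ) (φp ψp : ℝ → ℝ) (U V : ℝ → ℝ → ℝ)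
    (hφ : ContDiff ℝ 2 φp)
    (hε : 0 < ε)
    (hμ : 0 ≤ μc) (ht : 0 < t)
    (hUt : HasDerivAt (fun s => U s x) (pdt U t x) t)
    (hUx : ContDiff ℝ 2 (U t))
    (heq : pdt U t x = pdxx U t x + U t x * (r - γc) + μc * (V t x - U t x))
    (hγc : 0 ≤ γc) (hUnn : 0 ≤ U t x)
    (heig : -(deriv (deriv φp) x) - (r - μc) * φp x - μc * ψp x = lam1 * φp x)
    (hK : r + 2 < K)
    (hmaxx : ∀ y, U t y - M₀ * Real.exp (-lam1*t) * φp y - ε * Real.exp (K*t) * (1+y^2) ≤ 0)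
    (htouch : U t x = M₀ * Real.exp (-lam1*t) * φp x + ε * Real.exp (K*t) * (1+x^2))
    (hVle : V t x ≤ M₀ * Real.exp (-lam1*t) * ψp x + ε * Real.exp (K*t) * (1+x^2))
    (hmaxt : ∀ s ∈ Icc (t/2) t,
      U s x - M₀ * Real.exp (-lam1*s) * φp x - ε * Real.exp (K*s) * (1+x^2) ≤ 0) :
    False := by
  set E : ℝ := Real.exp (-lam1*t) with hE
  set E' : ℝ := Real.exp (K*t) with hE'
  have hEpos : 0 < E := Real.exp_pos _
  have hE'pos : 0 < E' := Real.exp_pos _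
  have hx2 : (0:ℝ) < 1 + x^2 := by positivity
  have hexp1 : ∀ s : ℝ, HasDerivAt (fun s' : ℝ => M₀ * Real.exp (-lam1*s') * φp x)
      (M₀ * (Real.exp (-lam1*s) * (-lam1)) * φp x) s := by
    intro s
    have h0 : HasDerivAt (fun s' : ℝ => -lam1 * s') (-lam1) s := by
      simpa using (hasDerivAt_id s).const_mul (-lam1)
    exact ((h0.exp.const_mul M₀).mul_const (φp x))
  have hexp2 : ∀ s : ℝ, HasDerivAt (fun s' : ℝ => ε * Real.exp (K*s') * (1+x^2))
      (ε * (Real.exp (K*s) * K) * (1+x^2)) s := by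
    intro s
    have h0 : HasDerivAt (fun s' : ℝ => K * s') K s := by
      simpa using (hasDerivAt_id s).const_mul K
    exact ((h0.exp.const_mul ε).mul_const (1+x^2))
  have hg : HasDerivAt
      (fun s => U s x - M₀ * Real.exp (-lam1*s) * φp x - ε * Real.exp (K*s) * (1+x^2))
      (pdt U t x - M₀ * (E * (-lam1)) * φp x - ε * (E' * K) * (1+x^2)) t :=
    (hUt.sub (hexp1 t)).sub (hexp2 t)
  have htime : 0 ≤ pdt U t x - M₀ * (E * (-lam1)) * φp x - ε * (E' * K) * (1+x^2) := by
    refine left_deriv_nonneg (a := t/2) hg (by linarith) ?_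
    intro s hs
    have h1 := hmaxt s hs
    have h2 : U t x - M₀ * E * φp x - ε * E' * (1+x^2) = 0 := by rw [htouch]; ring
    simp only [hE, hE'] at h2 ⊢
    rw [h2]; exact h1
  obtain ⟨hd1, hd2⟩ := deriv_of_contDiff_two hUx
  obtain ⟨hφ1, hφ2⟩ := deriv_of_contDiff_two hφ
  set hfun : ℝ → ℝ := fun y => U t y - M₀ * E * φp y - ε * E' * (1+y^2) with hfdef
  have hpoly : ContDiff ℝ 2 (fun y : ℝ => 1 + y^2) :=
    contDiff_const.add (contDiff_id.pow 2)
  have hfc : ContDiff ℝ 2 hfun :=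
    (hUx.sub (contDiff_const.mul hφ)).sub (contDiff_const.mul hpoly)
  have hder1 : ∀ y, HasDerivAt hfun
      (deriv (U t) y - M₀ * E * deriv φp y - ε * E' * (2*y)) y := by
    intro y
    have hu' : HasDerivAt (U t) (deriv (U t) y) y := (hd1 y).hasDerivAt
    have hφ' : HasDerivAt (fun y => M₀ * E * φp y) (M₀ * E * deriv φp y) y :=
      (hφ1 y).hasDerivAt.const_mul _
    have hp' : HasDerivAt (fun y : ℝ => ε * E' * (1+y^2)) (ε * E' * (2*y)) y := by
      have : HasDerivAt (fun y : ℝ => 1+y^2) (2*y) y := by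
        simpa using (hasDerivAt_pow 2 y).const_add 1
      exact this.const_mul _
    exact (hu'.sub hφ').sub hp'
  have hderiv_eq : deriv hfun = fun y =>
      deriv (U t) y - M₀ * E * deriv φp y - ε * E' * (2*y) :=
    funext fun y => (hder1 y).deriv
  have hder2 : HasDerivAt (deriv hfun)
      (pdxx U t x - M₀ * E * deriv (deriv φp) x - ε * E' * 2) x := by
    rw [hderiv_eq]
    have h1 : HasDerivAt (deriv (U t)) (pdxx U t x) x := (hd2 x).hasDerivAt
    have h2 : HasDerivAt (fun y => M₀ * E * deriv φp y) (M₀ * E * deriv (deriv φp) x) x :=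
      (hφ2 x).hasDerivAt.const_mul _
    have h3 : HasDerivAt (fun y : ℝ => ε * E' * (2*y)) (ε * E' * 2) x := by
      simpa using ((hasDerivAt_id x).const_mul 2).const_mul (ε * E')
    exact (h1.sub h2).sub h3
  have hspace : pdxx U t x - M₀ * E * deriv (deriv φp) x - ε * E' * 2 ≤ 0 := by
    have hmax' : ∀ y, hfun y ≤ hfun x := by
      intro y
      have hy := hmaxx y
      have hx0 : hfun x = 0 := by simp only [hfdef]; rw [htouch]; ring
      rw [hx0]
      exact hy
    have := second_deriv_nonpos_of_max hfc hmax'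
    rwa [hder2.deriv] at this
  set β : ℝ := ε * E' * (1+x^2) with hβ
  have hβpos : 0 < β := by positivity
  have hD : deriv (deriv φp) x = -(lam1 * φp x) - (r - μc) * φp x - μc * ψp x := by
    linarith [heig]
  have hUval : U t x = M₀ * E * φp x + β := htouch
  have hUγ : 0 ≤ U t x * γc := mul_nonneg hUnn hγc
  have hμV : μc * (V t x - U t x) ≤ μc * (M₀ * E * ψp x + β - U t x) := by
    apply mul_le_mul_of_nonneg_left _ hμ
    linarith [hVle]
  have hfin : (0:ℝ) ≤ β * (2 + r - K) := by
    have e1 : 0 ≤ pdt U t x + M₀ * lam1 * E * φp x - K * β := by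
      have h2 : ε * (E' * K) * (1+x^2) = K * β := by rw [hβ]; ring
      linarith [htime]
    have e2 : pdxx U t x ≤ M₀ * E * deriv (deriv φp) x + 2 * β := by
      have : ε * E' * 2 ≤ 2 * β := by
        rw [hβ]; nlinarith [sq_nonneg x, hε, hE'pos]
      linarith [hspace]
    have e3 : pdt U t x ≤ pdxx U t x + U t x * r + μc * (M₀ * E * ψp x + β - U t x) := by
      rw [heq]
      have : U t x * (r - γc) = U t x * r - U t x * γc := by ring
      linarith [hμV]
    rw [hD] at e2
    rw [hUval] at e3
    nlinarith [e1, e2, e3]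
  nlinarith [hfin, hβpos, hK]

set_option maxHeartbeats 1000000

/-- extinction at exponential rate when `lam1 > 0`. -/
theorem stmt2
    (L : ℝ) (hL : 0 < L)
    (ru rv γu γv μ : ℝ → ℝ)
    (hru : ContDiff ℝ (⊤ : ℕ∞) ru) (hrv : ContDiff ℝ (⊤ : ℕ∞) rv)
    (hγu : ContDiff ℝ (⊤ : ℕ∞) γu) (hγv : ContDiff ℝ (⊤ : ℕ∞) γv) (hμ : ContDiff ℝ (⊤ : ℕ∞) μ)
    (hru_per : ∀ x, ru (x + L) = ru x) (hrv_per : ∀ x, rv (x + L) = rv x)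
    (hγu_per : ∀ x, γu (x + L) = γu x) (hγv_per : ∀ x, γv (x + L) = γv x)
    (hμ_per : ∀ x, μ (x + L) = μ x)
    (hγu_pos : ∀ x, 0 < γu x) (hγv_pos : ∀ x, 0 < γv x) (hμ_pos : ∀ x, 0 < μ x)
    -- principal periodic eigenpair for `-d²/dx² - A(x)`
    (lam1 : ℝ) (φ ψ : ℝ → ℝ)
    (hφ : ContDiff ℝ 2 φ) (hψ : ContDiff ℝ 2 ψ)
    (hφ_pos : ∀ x, 0 < φ x) (hψ_pos : ∀ x, 0 < ψ x)
    (hφ_per : ∀ x, φ (x + L) = φ x) (hψ_per : ∀ x, ψ (x + L) = ψ x)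
    (hφ_eq : ∀ x, -(deriv (deriv φ) x) - (ru x - μ x) * φ x - μ x * ψ x = lam1 * φ x)
    (hψ_eq : ∀ x, -(deriv (deriv ψ) x) - (rv x - μ x) * ψ x - μ x * φ x = lam1 * ψ x)
    (hlam1 : 0 < lam1)
    -- nonnegative bounded initial data
    (u0 v0 : ℝ → ℝ)
    (hu0_nonneg : ∀ x, 0 ≤ u0 x) (hv0_nonneg : ∀ x, 0 ≤ v0 x)
    (h0_bdd : ∃ B : ℝ, ∀ x, u0 x ≤ B ∧ v0 x ≤ B)
    -- a nonnegative bounded classical solution on (0,∞) × ℝ with initial data (u0, v0)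
    (u v : ℝ → ℝ → ℝ)
    (hu_reg : ContDiffOn ℝ 2 (Function.uncurry u) (Ioi (0:ℝ) ×ˢ univ))
    (hv_reg : ContDiffOn ℝ 2 (Function.uncurry v) (Ioi (0:ℝ) ×ˢ univ))
    (hu_cont : ContinuousOn (Function.uncurry u) (Ici (0:ℝ) ×ˢ univ))
    (hv_cont : ContinuousOn (Function.uncurry v) (Ici (0:ℝ) ×ˢ univ))
    (h_init : ∀ x, u 0 x = u0 x ∧ v 0 x = v0 x)
    (h_nonneg : ∀ t ≥ (0:ℝ), ∀ x, 0 ≤ u t x ∧ 0 ≤ v t x)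
    (h_bdd : ∃ B : ℝ, ∀ t ≥ (0:ℝ), ∀ x, u t x ≤ B ∧ v t x ≤ B)
    (hu_eq : ∀ t > (0:ℝ), ∀ x, pdt u t x
        = pdxx u t x + u t x * (ru x - γu x * (u t x + v t x)) + μ x * (v t x - u t x))
    (hv_eq : ∀ t > (0:ℝ), ∀ x, pdt v t x
        = pdxx v t x + v t x * (rv x - γv x * (u t x + v t x)) + μ x * (u t x - v t x)) :
    ∃ M > (0:ℝ), ∀ t > (0:ℝ), ∀ x,
      u t x ≤ M * Real.exp (-lam1 * t) ∧ v t x ≤ M * Real.exp (-lam1 * t) := by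
  classical
  obtain ⟨B₁, hB₁⟩ := h_bdd
  set B : ℝ := max B₁ 1 with hBdef
  have hBpos : 0 < B := lt_of_lt_of_le one_pos (le_max_right _ _)
  have hBu : ∀ t ≥ (0:ℝ), ∀ x, u t x ≤ B := fun t ht x =>
    le_trans (hB₁ t ht x).1 (le_max_left _ _)
  have hBv : ∀ t ≥ (0:ℝ), ∀ x, v t x ≤ B := fun t ht x =>
    le_trans (hB₁ t ht x).2 (le_max_left _ _)
  obtain ⟨mφ, Mφ, ⟨xφ, hxφ⟩, ⟨yφ, hyφ⟩, hφbd⟩ := per_bounds hL φ hφ.continuous hφ_per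
  obtain ⟨mψ, Mψ, ⟨xψ, hxψ⟩, ⟨yψ, hyψ⟩, hψbd⟩ := per_bounds hL ψ hψ.continuous hψ_per
  obtain ⟨cru, Cru, _, ⟨yru, hyru⟩, hrubd⟩ := per_bounds hL ru hru.continuous hru_per
  obtain ⟨crv, Crv, _, ⟨yrv, hyrv⟩, hrvbd⟩ := per_bounds hL rv hrv.continuous hrv_per
  have hmφpos : 0 < mφ := hxφ ▸ hφ_pos xφ
  have hmψpos : 0 < mψ := hxψ ▸ hψ_pos xψ
  have hMφpos : 0 < Mφ := lt_of_lt_of_le (hφ_pos 0) (hφbd 0).2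
  have hMψpos : 0 < Mψ := lt_of_lt_of_le (hψ_pos 0) (hψbd 0).2
  set m : ℝ := min mφ mψ with hm
  have hmpos : 0 < m := lt_min hmφpos hmψpos
  set M₀ : ℝ := B / m with hM₀
  have hM₀pos : 0 < M₀ := div_pos hBpos hmpos
  have hM₀φ : ∀ x, B ≤ M₀ * φ x := by
    intro x
    have h1 : M₀ * m = B := by rw [hM₀]; exact div_mul_cancel₀ B hmpos.ne'
    have h2 : m ≤ φ x := le_trans (min_le_left _ _) (hφbd x).1
    nlinarith
  have hM₀ψ : ∀ x, B ≤ M₀ * ψ x := by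
    intro x
    have h1 : M₀ * m = B := by rw [hM₀]; exact div_mul_cancel₀ B hmpos.ne'
    have h2 : m ≤ ψ x := le_trans (min_le_right _ _) (hψbd x).1
    nlinarith
  set K : ℝ := max Cru Crv + 3 with hK
  have hKu : ∀ x, ru x + 2 < K := fun x =>
    lt_of_le_of_lt (add_le_add_left ((hrubd x).2.trans (le_max_left _ _)) 2) (by rw [hK]; linarith)
  have hKv : ∀ x, rv x + 2 < K := fun x =>
    lt_of_le_of_lt (add_le_add_left ((hrvbd x).2.trans (le_max_right _ _)) 2) (by rw [hK]; linarith)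
  -- regularity helpers
  have hopen : IsOpen (Ioi (0:ℝ) ×ˢ (univ : Set ℝ)) := isOpen_Ioi.prod isOpen_univ
  have hder_u : ∀ t x : ℝ, 0 < t → HasDerivAt (fun s => u s x) (pdt u t x) t := by
    intro t x ht
    have hca : ContDiffAt ℝ 2 (Function.uncurry u) (t, x) :=
      hu_reg.contDiffAt (hopen.mem_nhds ⟨ht, mem_univ _⟩)
    have hdiff : DifferentiableAt ℝ (Function.uncurry u) (t, x) :=
      hca.differentiableAt (by norm_num)
    have h1 : DifferentiableAt ℝ (fun s => u s x) t :=
      by have h2 : DifferentiableAt ℝ (fun s : ℝ => (s, x)) t := (differentiableAt_fun_id (x := t)).prodMk (differentiableAt_const x); exact hdiff.comp t h2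
    exact h1.hasDerivAt
  have hder_v : ∀ t x : ℝ, 0 < t → HasDerivAt (fun s => v s x) (pdt v t x) t := by
    intro t x ht
    have hca : ContDiffAt ℝ 2 (Function.uncurry v) (t, x) :=
      hv_reg.contDiffAt (hopen.mem_nhds ⟨ht, mem_univ _⟩)
    have hdiff : DifferentiableAt ℝ (Function.uncurry v) (t, x) :=
      hca.differentiableAt (by norm_num)
    have h1 : DifferentiableAt ℝ (fun s => v s x) t :=
      by have h2 : DifferentiableAt ℝ (fun s : ℝ => (s, x)) t := (differentiableAt_fun_id (x := t)).prodMk (differentiableAt_const x); exact hdiff.comp t h2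
    exact h1.hasDerivAt
  have hslice_u : ∀ t : ℝ, 0 < t → ContDiff ℝ 2 (u t) := by
    intro t ht
    have h1 : ContDiffOn ℝ 2 (fun y => Function.uncurry u (t, y)) univ :=
      hu_reg.comp ((contDiff_const.prodMk contDiff_id).contDiffOn)
        (fun y _ => ⟨ht, mem_univ _⟩)
    exact contDiffOn_univ.mp h1
  have hslice_v : ∀ t : ℝ, 0 < t → ContDiff ℝ 2 (v t) := by
    intro t ht
    have h1 : ContDiffOn ℝ 2 (fun y => Function.uncurry v (t, y)) univ :=
      hv_reg.comp ((contDiff_const.prodMk contDiff_id).contDiffOn)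
        (fun y _ => ⟨ht, mem_univ _⟩)
    exact contDiffOn_univ.mp h1
  -- MAIN CLAIM
  have claim : ∀ ε > (0:ℝ), ∀ T > (0:ℝ), ∀ t ∈ Icc (0:ℝ) T, ∀ x : ℝ,
      max (u t x - M₀ * Real.exp (-lam1*t) * φ x) (v t x - M₀ * Real.exp (-lam1*t) * ψ x)
        - ε * Real.exp (K*t) * (1+x^2) < 0 := by
    intro ε hε T hT
    by_contra hcon
    push_neg at hcon
    obtain ⟨t₁, ht₁, x₁, hσ₁⟩ := hcon
    set σ : ℝ → ℝ → ℝ := fun t x =>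
      max (u t x - M₀ * Real.exp (-lam1*t) * φ x) (v t x - M₀ * Real.exp (-lam1*t) * ψ x)
        - ε * Real.exp (K*t) * (1+x^2) with hσdef
    -- bound on x where σ ≥ 0
    set c₀ : ℝ := Real.exp (min 0 (K*T)) with hc₀
    have hc₀pos : 0 < c₀ := Real.exp_pos _
    have hexp_ge : ∀ t ∈ Icc (0:ℝ) T, c₀ ≤ Real.exp (K*t) := by
      intro t ht
      apply Real.exp_le_exp.mpr
      rcases le_or_gt 0 K with h | h
      · exact le_trans (min_le_left _ _) (mul_nonneg h ht.1)
      · refine le_trans (min_le_right _ _) ?_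
        nlinarith [ht.2]
    set R : ℝ := Real.sqrt (B / (ε * c₀)) with hR
    have hxbound : ∀ t ∈ Icc (0:ℝ) T, ∀ x : ℝ, 0 ≤ σ t x → x ∈ Icc (-R) R := by
      intro t ht x hσx
      have hφnn : 0 ≤ M₀ * Real.exp (-lam1*t) * φ x :=
        mul_nonneg (mul_nonneg hM₀pos.le (Real.exp_pos _).le) (hφ_pos x).le
      have hψnn : 0 ≤ M₀ * Real.exp (-lam1*t) * ψ x :=
        mul_nonneg (mul_nonneg hM₀pos.le (Real.exp_pos _).le) (hψ_pos x).le
      have hwB : u t x - M₀ * Real.exp (-lam1*t) * φ x ≤ B := by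
        linarith [hBu t ht.1 x]
      have hzB : v t x - M₀ * Real.exp (-lam1*t) * ψ x ≤ B := by
        linarith [hBv t ht.1 x]
      have hmaxB : max (u t x - M₀ * Real.exp (-lam1*t) * φ x)
          (v t x - M₀ * Real.exp (-lam1*t) * ψ x) ≤ B := max_le hwB hzB
      have h1 : ε * Real.exp (K*t) * (1+x^2) ≤ B := by
        simp only [hσdef] at hσx
        linarith
      have h2 : ε * c₀ * (1+x^2) ≤ B := by
        have := hexp_ge t ht
        nlinarith [sq_nonneg x]
      have h3 : x^2 ≤ B / (ε * c₀) := by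
        rw [le_div_iff₀ (by positivity)]
        nlinarith
      have habs : |x| ≤ R := by
        rw [hR, ← Real.sqrt_sq_eq_abs]
        exact Real.sqrt_le_sqrt h3
      exact abs_le.mp habs
    set K₀ : Set (ℝ × ℝ) := Icc (0:ℝ) T ×ˢ Icc (-R) R with hK₀
    have hK₀comp : IsCompact K₀ := isCompact_Icc.prod isCompact_Icc
    have hK₀closed : IsClosed K₀ := isClosed_Icc.prod isClosed_Icc
    have hsub : K₀ ⊆ Ici (0:ℝ) ×ˢ (univ : Set ℝ) := fun p hp => ⟨hp.1.1, mem_univ _⟩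
    have hcu : ContinuousOn (fun p : ℝ × ℝ => u p.1 p.2) K₀ := hu_cont.mono hsub
    have hcv : ContinuousOn (fun p : ℝ × ℝ => v p.1 p.2) K₀ := hv_cont.mono hsub
    have hc1 : Continuous (fun p : ℝ × ℝ => M₀ * Real.exp (-lam1*p.1) * φ p.2) :=
      (continuous_const.mul (Real.continuous_exp.comp
        (continuous_const.mul continuous_fst))).mul (hφ.continuous.comp continuous_snd)
    have hc2 : Continuous (fun p : ℝ × ℝ => M₀ * Real.exp (-lam1*p.1) * ψ p.2) :=
      (continuous_const.mul (Real.continuous_exp.comp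
        (continuous_const.mul continuous_fst))).mul (hψ.continuous.comp continuous_snd)
    have hc3 : Continuous (fun p : ℝ × ℝ => ε * Real.exp (K*p.1) * (1+p.2^2)) :=
      (continuous_const.mul (Real.continuous_exp.comp
        (continuous_const.mul continuous_fst))).mul
        (continuous_const.add (continuous_snd.pow 2))
    have hσcont : ContinuousOn (fun p : ℝ × ℝ => σ p.1 p.2) K₀ :=
      ((hcu.sub hc1.continuousOn).sup (hcv.sub hc2.continuousOn)).sub hc3.continuousOn
    set S : Set (ℝ × ℝ) := K₀ ∩ (fun p : ℝ × ℝ => σ p.1 p.2) ⁻¹' Ici 0 with hS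
    have hSclosed : IsClosed S :=
      hσcont.preimage_isClosed_of_isClosed hK₀closed isClosed_Ici
    have hScomp : IsCompact S := hK₀comp.of_isClosed_subset hSclosed inter_subset_left
    have hSne : S.Nonempty :=
      ⟨(t₁, x₁), ⟨⟨ht₁, hxbound t₁ ht₁ x₁ hσ₁⟩, hσ₁⟩⟩
    obtain ⟨pst, hpS, hpmin⟩ := hScomp.exists_isMinOn hSne continuous_fst.continuousOn
    rw [isMinOn_iff] at hpmin
    obtain ⟨⟨⟨htst0, htstT⟩, hxstR⟩, hsst⟩ := hpS
    set tst : ℝ := pst.1 with htstdef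
    set xst : ℝ := pst.2 with hxstdef
    -- P1: before tst everything is negative
    have P1 : ∀ s, 0 ≤ s → s < tst → ∀ y, σ s y < 0 := by
      intro s hs0 hst y
      by_contra hwrong
      push_neg at hwrong
      have hsT : s ∈ Icc (0:ℝ) T := ⟨hs0, le_trans hst.le htstT⟩
      have hy := hxbound s hsT y hwrong
      have hmem : (s, y) ∈ S := ⟨⟨hsT, hy⟩, hwrong⟩
      have := hpmin (s, y) hmem
      simp only at this
      linarith
    -- P2: tst > 0
    have hsst' : (0:ℝ) ≤ σ tst xst := hsst
    have hσ0 : ∀ y, σ 0 y < 0 := by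
      intro y
      have h1 : u 0 y ≤ B := hBu 0 le_rfl y
      have h2 : v 0 y ≤ B := hBv 0 le_rfl y
      have h3 : B ≤ M₀ * φ y := hM₀φ y
      have h4 : B ≤ M₀ * ψ y := hM₀ψ y
      have he : Real.exp (-lam1*(0:ℝ)) = 1 := by rw [mul_zero, Real.exp_zero]
      have he2 : Real.exp (K*(0:ℝ)) = 1 := by rw [mul_zero, Real.exp_zero]
      have hsq : (0:ℝ) ≤ y^2 := sq_nonneg y
      simp only [hσdef, he, he2]
      have hmx : max (u 0 y - M₀ * 1 * φ y) (v 0 y - M₀ * 1 * ψ y) ≤ 0 :=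
        max_le (by linarith) (by linarith)
      nlinarith
    have htstpos : 0 < tst := by
      rcases lt_or_eq_of_le htst0 with h | h
      · exact h
      · exfalso
        have h1 := hσ0 xst
        rw [h] at h1
        linarith
    -- P3: at time tst everything is ≤ 0
    have P3 : ∀ y, σ tst y ≤ 0 := by
      intro y
      by_contra hy
      push_neg at hy
      have hcyu : ContinuousOn (fun s => u s y) (Ici (0:ℝ)) :=
        hu_cont.comp (continuous_id.prodMk continuous_const).continuousOn
          (fun s hs => ⟨hs, mem_univ _⟩)
      have hcyv : ContinuousOn (fun s => v s y) (Ici (0:ℝ)) :=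
        hv_cont.comp (continuous_id.prodMk continuous_const).continuousOn
          (fun s hs => ⟨hs, mem_univ _⟩)
      have hcy1 : Continuous (fun s : ℝ => M₀ * Real.exp (-lam1*s) * φ y) :=
        (continuous_const.mul (Real.continuous_exp.comp
          (continuous_const.mul continuous_id))).mul continuous_const
      have hcy2 : Continuous (fun s : ℝ => M₀ * Real.exp (-lam1*s) * ψ y) :=
        (continuous_const.mul (Real.continuous_exp.comp
          (continuous_const.mul continuous_id))).mul continuous_const
      have hcy3 : Continuous (fun s : ℝ => ε * Real.exp (K*s) * (1+y^2)) :=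
        (continuous_const.mul (Real.continuous_exp.comp
          (continuous_const.mul continuous_id))).mul continuous_const
      have hcy : ContinuousOn (fun s => σ s y) (Ici (0:ℝ)) :=
        ((hcyu.sub hcy1.continuousOn).sup (hcyv.sub hcy2.continuousOn)).sub
          hcy3.continuousOn
      have hct : ContinuousAt (fun s => σ s y) tst :=
        hcy.continuousAt (Ici_mem_nhds htstpos)
      have hev : ∀ᶠ s in nhdsWithin tst (Iio tst), 0 < σ s y :=
        (hct.tendsto.eventually (eventually_gt_nhds hy)).filter_mono nhdsWithin_le_nhds
      have hev2 : Ioo (tst/2) tst ∈ nhdsWithin tst (Iio tst) :=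
        Ioo_mem_nhdsLT_of_mem ⟨by linarith, le_rfl⟩
      obtain ⟨s, hs1, hs2⟩ := (hev.and hev2).exists
      have := P1 s (by linarith [hs2.1]) hs2.2 y
      linarith
    have hσeq : σ tst xst = 0 := le_antisymm (P3 xst) hsst'
    -- component bounds at time tst
    have hwle : ∀ y, u tst y - M₀ * Real.exp (-lam1*tst) * φ y
        - ε * Real.exp (K*tst) * (1+y^2) ≤ 0 := by
      intro y
      have h0 := P3 y
      simp only [hσdef] at h0
      have := le_max_left (u tst y - M₀ * Real.exp (-lam1*tst) * φ y)
        (v tst y - M₀ * Real.exp (-lam1*tst) * ψ y)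
      linarith
    have hzle : ∀ y, v tst y - M₀ * Real.exp (-lam1*tst) * ψ y
        - ε * Real.exp (K*tst) * (1+y^2) ≤ 0 := by
      intro y
      have h0 := P3 y
      simp only [hσdef] at h0
      have := le_max_right (u tst y - M₀ * Real.exp (-lam1*tst) * φ y)
        (v tst y - M₀ * Real.exp (-lam1*tst) * ψ y)
      linarith
    have hmax0 : max (u tst xst - M₀ * Real.exp (-lam1*tst) * φ xst)
        (v tst xst - M₀ * Real.exp (-lam1*tst) * ψ xst)
        = ε * Real.exp (K*tst) * (1+xst^2) := by
      have h0 : σ tst xst = 0 := hσeq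
      simp only [hσdef] at h0
      linarith
    rcases max_choice (u tst xst - M₀ * Real.exp (-lam1*tst) * φ xst)
        (v tst xst - M₀ * Real.exp (-lam1*tst) * ψ xst) with hc | hc
    · -- the u-component touches the barrier
      have htouch : u tst xst = M₀ * Real.exp (-lam1*tst) * φ xst
          + ε * Real.exp (K*tst) * (1+xst^2) := by
        rw [hc] at hmax0
        linarith
      have hVle : v tst xst ≤ M₀ * Real.exp (-lam1*tst) * ψ xst
          + ε * Real.exp (K*tst) * (1+xst^2) := by linarith [hzle xst]
      have hmaxt : ∀ s ∈ Icc (tst/2) tst, u s xst - M₀ * Real.exp (-lam1*s) * φ xst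
          - ε * Real.exp (K*s) * (1+xst^2) ≤ 0 := by
        intro s hs
        rcases eq_or_lt_of_le hs.2 with he | hlt
        · rw [he]; exact hwle xst
        · have h0 := P1 s (by linarith [hs.1]) hlt xst
          simp only [hσdef] at h0
          have := le_max_left (u s xst - M₀ * Real.exp (-lam1*s) * φ xst)
            (v s xst - M₀ * Real.exp (-lam1*s) * ψ xst)
          linarith
      exact key_lemma (ru xst) (μ xst) (γu xst * (u tst xst + v tst xst)) lam1 M₀ ε K tst xst
        φ ψ u v hφ hε (hμ_pos xst).le htstpos (hder_u tst xst htstpos) (hslice_u tst htstpos)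
        (hu_eq tst htstpos xst)
        (mul_nonneg (hγu_pos xst).le
          (add_nonneg (h_nonneg tst htstpos.le xst).1 (h_nonneg tst htstpos.le xst).2))
        (h_nonneg tst htstpos.le xst).1 (hφ_eq xst) (hKu xst) hwle htouch hVle hmaxt
    · -- the v-component touches the barrier
      have htouch : v tst xst = M₀ * Real.exp (-lam1*tst) * ψ xst
          + ε * Real.exp (K*tst) * (1+xst^2) := by
        rw [hc] at hmax0
        linarith
      have hVle : u tst xst ≤ M₀ * Real.exp (-lam1*tst) * φ xst
          + ε * Real.exp (K*tst) * (1+xst^2) := by linarith [hwle xst]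
      have hmaxt : ∀ s ∈ Icc (tst/2) tst, v s xst - M₀ * Real.exp (-lam1*s) * ψ xst
          - ε * Real.exp (K*s) * (1+xst^2) ≤ 0 := by
        intro s hs
        rcases eq_or_lt_of_le hs.2 with he | hlt
        · rw [he]; exact hzle xst
        · have h0 := P1 s (by linarith [hs.1]) hlt xst
          simp only [hσdef] at h0
          have := le_max_right (u s xst - M₀ * Real.exp (-lam1*s) * φ xst)
            (v s xst - M₀ * Real.exp (-lam1*s) * ψ xst)
          linarith
      exact key_lemma (rv xst) (μ xst) (γv xst * (u tst xst + v tst xst)) lam1 M₀ ε K tst xst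
        ψ φ v u hψ hε (hμ_pos xst).le htstpos (hder_v tst xst htstpos) (hslice_v tst htstpos)
        (hv_eq tst htstpos xst)
        (mul_nonneg (hγv_pos xst).le
          (add_nonneg (h_nonneg tst htstpos.le xst).1 (h_nonneg tst htstpos.le xst).2))
        (h_nonneg tst htstpos.le xst).2 (hψ_eq xst) (hKv xst) hzle htouch hVle hmaxt
  -- conclude from the claim
  have hdecay_u : ∀ t > (0:ℝ), ∀ x, u t x ≤ M₀ * Real.exp (-lam1*t) * φ x := by
    intro t ht x
    refine le_of_forall_pos_le_add ?_
    intro δ hδ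
    have hcpos : (0:ℝ) < Real.exp (K*t) * (1+x^2) := by positivity
    have h := claim (δ / (Real.exp (K*t) * (1+x^2))) (by positivity) t ht t ⟨ht.le, le_rfl⟩ x
    have h3 : δ / (Real.exp (K*t) * (1+x^2)) * Real.exp (K*t) * (1+x^2) = δ := by
      field_simp
    have := le_max_left (u t x - M₀ * Real.exp (-lam1*t) * φ x)
      (v t x - M₀ * Real.exp (-lam1*t) * ψ x)
    linarith
  have hdecay_v : ∀ t > (0:ℝ), ∀ x, v t x ≤ M₀ * Real.exp (-lam1*t) * ψ x := by
    intro t ht x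
    refine le_of_forall_pos_le_add ?_
    intro δ hδ
    have hcpos : (0:ℝ) < Real.exp (K*t) * (1+x^2) := by positivity
    have h := claim (δ / (Real.exp (K*t) * (1+x^2))) (by positivity) t ht t ⟨ht.le, le_rfl⟩ x
    have h3 : δ / (Real.exp (K*t) * (1+x^2)) * Real.exp (K*t) * (1+x^2) = δ := by
      field_simp
    have := le_max_right (u t x - M₀ * Real.exp (-lam1*t) * φ x)
      (v t x - M₀ * Real.exp (-lam1*t) * ψ x)
    linarith
  refine ⟨M₀ * max Mφ Mψ,
    mul_pos hM₀pos (lt_of_lt_of_le hMφpos (le_max_left _ _)), ?_⟩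
  intro t ht x
  have hepos := Real.exp_pos (-lam1*t)
  constructor
  · have h1 := hdecay_u t ht x
    have h2 : M₀ * Real.exp (-lam1*t) * φ x ≤ M₀ * max Mφ Mψ * Real.exp (-lam1*t) := by
      have hle : φ x ≤ max Mφ Mψ := le_trans (hφbd x).2 (le_max_left _ _)
      have := mul_le_mul_of_nonneg_left hle (mul_nonneg hM₀pos.le hepos.le)
      nlinarith [this]
    linarith
  · have h1 := hdecay_v t ht x
    have h2 : M₀ * Real.exp (-lam1*t) * ψ x ≤ M₀ * max Mφ Mψ * Real.exp (-lam1*t) := by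
      have hle : ψ x ≤ max Mφ Mψ := le_trans (hψbd x).2 (le_max_right _ _)
      have := mul_le_mul_of_nonneg_left hle (mul_nonneg hM₀pos.le hepos.le)
      nlinarith [this]
    linarith
end

section
/- Set C := max(r^∞/γ⁰, μ^∞/γ⁰). Then every L-periodic C² pair (p,q) with p ≥ 0 and q ≥ 0 solving the steady system -p'' = (r_u - γ_u(p+q))p + μ(q - p), -q'' = (r_v - γ_v(p+q))q + μ(p - q) on ℝ satisfies p(x) ≤ C and q(x) ≤ C for all x ∈ ℝ. -/
open Set Filter Topology

/-- If `w` is `C²` and attains a global maximum at `x0`, then `w'' x0 ≤ 0`. -/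
lemma aux_secondDeriv_nonpos {w : ℝ → ℝ} (hw : ContDiff ℝ 2 w) {x0 : ℝ}
    (hmax : ∀ x, w x ≤ w x0) : deriv (deriv w) x0 ≤ 0 := by
  have hw2 : ContDiff ℝ (1 + 1) w := by exact_mod_cast hw
  rw [contDiff_succ_iff_deriv] at hw2
  obtain ⟨hw1, -, hwd⟩ := hw2
  have hwd1 : Differentiable ℝ (deriv w) := hwd.differentiable one_ne_zero
  by_contra hcon
  push_neg at hcon
  -- `g := deriv w` has `g x0 = 0` and positive derivative at `x0`
  have hg0 : deriv w x0 = 0 := by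
    have : IsLocalMax w x0 := by
      filter_upwards with x using hmax x
    exact this.deriv_eq_zero
  have hd : HasDerivAt (deriv w) (deriv (deriv w) x0) x0 := (hwd1 x0).hasDerivAt
  -- slope of deriv w tends to a positive limit, so deriv w > 0 just right of x0
  have hslope := hasDerivAt_iff_tendsto_slope.mp hd
  have hpos : ∀ᶠ x in 𝓝[>] x0, 0 < slope (deriv w) x0 x := by
    have : ∀ᶠ x in 𝓝[≠] x0, 0 < slope (deriv w) x0 x :=
      hslope.eventually (eventually_gt_nhds hcon)
    exact this.filter_mono (nhdsWithin_mono _ fun x hx => ne_of_gt hx)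
  have hpos' : ∀ᶠ x in 𝓝[>] x0, 0 < deriv w x := by
    filter_upwards [hpos, self_mem_nhdsWithin] with x hx (hx' : x0 < x)
    have : 0 < (deriv w x - deriv w x0) / (x - x0) := by
      simpa [slope_def_field, div_eq_inv_mul] using hx
    have h1 : 0 < deriv w x - deriv w x0 :=
      (div_pos_iff.mp this).resolve_right (fun h => absurd (sub_pos.mpr hx') (not_lt.mpr h.2.le)) |>.1
    linarith [hg0]
  -- get an interval (x0, b) where deriv w > 0
  obtain ⟨b, hb, hIb⟩ := (mem_nhdsGT_iff_exists_Ioo_subset).mp hpos'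
  -- w is strictly increasing on [x0, b], contradicting the maximum
  have hmono : StrictMonoOn w (Icc x0 b) := by
    apply strictMonoOn_of_deriv_pos (convex_Icc _ _) (hw1.continuous.continuousOn)
    intro x hx
    rw [interior_Icc] at hx
    exact hIb hx
  have hmem : (x0 + b) / 2 ∈ Icc x0 b := by
    constructor <;> [linarith [mem_Ioi.mp hb]; linarith [mem_Ioi.mp hb]]
  have : w x0 < w ((x0 + b) / 2) := by
    apply hmono (left_mem_Icc.mpr (by linarith [mem_Ioi.mp hb])) hmem
    have := mem_Ioi.mp hb; linarith
  exact absurd (hmax ((x0 + b) / 2)) (not_le.mpr this)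

/-- uniform upper bound for nonnegative periodic steady states. -/
theorem stmt5
    (L : ℝ) (hL : 0 < L)
    (ru rv γu γv μ : ℝ → ℝ)
    (hru : ContDiff ℝ (⊤ : ℕ∞) ru) (hrv : ContDiff ℝ (⊤ : ℕ∞) rv)
    (hγu : ContDiff ℝ (⊤ : ℕ∞) γu) (hγv : ContDiff ℝ (⊤ : ℕ∞) γv) (hμ : ContDiff ℝ (⊤ : ℕ∞) μ)
    (hru_per : ∀ x, ru (x + L) = ru x) (hrv_per : ∀ x, rv (x + L) = rv x)
    (hγu_per : ∀ x, γu (x + L) = γu x) (hγv_per : ∀ x, γv (x + L) = γv x)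
    (hμ_per : ∀ x, μ (x + L) = μ x)
    (hγu_pos : ∀ x, 0 < γu x) (hγv_pos : ∀ x, 0 < γv x) (hμ_pos : ∀ x, 0 < μ x)
    -- the bounds on the coefficients
    (γ0 rinfty μinfty : ℝ) (hγ0 : 0 < γ0)
    (hγ0_le : ∀ x, γ0 ≤ γu x ∧ γ0 ≤ γv x)
    (hμ_le : ∀ x, μ x ≤ μinfty)
    (hr_le : ∀ x, ru x ≤ rinfty ∧ rv x ≤ rinfty)
    -- a nonnegative L-periodic C² steady state
    (p q : ℝ → ℝ)
    (hp : ContDiff ℝ 2 p) (hq : ContDiff ℝ 2 q)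
    (hp_per : ∀ x, p (x + L) = p x) (hq_per : ∀ x, q (x + L) = q x)
    (hp_nonneg : ∀ x, 0 ≤ p x) (hq_nonneg : ∀ x, 0 ≤ q x)
    (hp_eq : ∀ x, -(deriv (deriv p) x)
        = (ru x - γu x * (p x + q x)) * p x + μ x * (q x - p x))
    (hq_eq : ∀ x, -(deriv (deriv q) x)
        = (rv x - γv x * (p x + q x)) * q x + μ x * (p x - q x)) :
    ∀ x, p x ≤ max (rinfty / γ0) (μinfty / γ0) ∧ q x ≤ max (rinfty / γ0) (μinfty / γ0) := by
  set C := max (rinfty / γ0) (μinfty / γ0) with hC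
  have hC_pos : 0 < C :=
    lt_of_lt_of_le (div_pos (lt_of_lt_of_le (hμ_pos 0) (hμ_le 0)) hγ0) (le_max_right _ _)
  have hCr : rinfty / γ0 ≤ C := le_max_left _ _
  have hCr' : rinfty ≤ γ0 * C := by
    rw [mul_comm]
    exact (div_le_iff₀ hγ0).mp hCr
  -- the sum w = p + q
  set w : ℝ → ℝ := fun x => p x + q x with hw_def
  have hw : ContDiff ℝ 2 w := hp.add hq
  have hw_per : Function.Periodic w L := fun x => by simp [hw_def, hp_per, hq_per]
  -- differentiability facts
  have hp2 : ContDiff ℝ (1 + 1) p := by exact_mod_cast hp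
  have hq2 : ContDiff ℝ (1 + 1) q := by exact_mod_cast hq
  rw [contDiff_succ_iff_deriv] at hp2 hq2
  obtain ⟨hp1, -, hpd⟩ := hp2
  obtain ⟨hq1, -, hqd⟩ := hq2
  have hpd1 : Differentiable ℝ (deriv p) := hpd.differentiable one_ne_zero
  have hqd1 : Differentiable ℝ (deriv q) := hqd.differentiable one_ne_zero
  -- second derivative of the sum
  have hderiv_w : deriv w = fun x => deriv p x + deriv q x := by
    funext x
    exact deriv_add (hp1 x) (hq1 x)
  have hw_eq : ∀ x, deriv (deriv w) x = deriv (deriv p) x + deriv (deriv q) x := by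
    intro x
    rw [hderiv_w]
    exact deriv_add (hpd1 x) (hqd1 x)
  -- w attains its maximum
  obtain ⟨x0, hx0mem, hx0max⟩ := isCompact_Icc.exists_isMaxOn (nonempty_Icc.mpr
    (by linarith : (0:ℝ) ≤ 0 + L)) (hw.continuous.continuousOn)
  have hmax : ∀ x, w x ≤ w x0 := by
    intro x
    obtain ⟨y, hy, hxy⟩ := hw_per.exists_mem_Ioc hL x 0
    rw [hxy]
    exact hx0max (Ioc_subset_Icc_self hy)
  -- conclude w x0 ≤ C
  have hwx0 : w x0 ≤ C := by
    by_contra hcon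
    push_neg at hcon
    have h2 : deriv (deriv w) x0 ≤ 0 := aux_secondDeriv_nonpos hw hmax
    have hsum : -(deriv (deriv w) x0)
        = (ru x0 - γu x0 * (p x0 + q x0)) * p x0 + (rv x0 - γv x0 * (p x0 + q x0)) * q x0 := by
      rw [hw_eq]
      have := hp_eq x0
      have := hq_eq x0
      ring_nf
      nlinarith [hp_eq x0, hq_eq x0]
    have hwx0' : w x0 = p x0 + q x0 := rfl
    have hwpos : 0 < p x0 + q x0 := by rw [← hwx0']; linarith
    -- each coefficient is negative
    have hcu : ru x0 - γu x0 * (p x0 + q x0) < 0 := by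
      have h1 : γ0 * C < γ0 * (p x0 + q x0) := by
        apply mul_lt_mul_of_pos_left _ hγ0
        rw [← hwx0']; exact hcon
      have h2 : γ0 * (p x0 + q x0) ≤ γu x0 * (p x0 + q x0) :=
        mul_le_mul_of_nonneg_right (hγ0_le x0).1 hwpos.le
      linarith [(hr_le x0).1]
    have hcv : rv x0 - γv x0 * (p x0 + q x0) < 0 := by
      have h1 : γ0 * C < γ0 * (p x0 + q x0) := by
        apply mul_lt_mul_of_pos_left _ hγ0
        rw [← hwx0']; exact hcon
      have h2 : γ0 * (p x0 + q x0) ≤ γv x0 * (p x0 + q x0) :=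
        mul_le_mul_of_nonneg_right (hγ0_le x0).2 hwpos.le
      linarith [(hr_le x0).2]
    -- RHS is strictly negative since p x0 + q x0 > 0
    have hrhs : (ru x0 - γu x0 * (p x0 + q x0)) * p x0
        + (rv x0 - γv x0 * (p x0 + q x0)) * q x0 < 0 := by
      rcases lt_or_eq_of_le (hp_nonneg x0) with hp0 | hp0
      · nlinarith [hq_nonneg x0]
      · have hq0 : 0 < q x0 := by rw [← hp0] at hwpos; linarith
        nlinarith
    linarith [hsum, h2]
  intro x
  have hx : w x ≤ C := le_trans (hmax x) hwx0
  constructor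
  · have := hq_nonneg x; simp only [hw_def] at hx; linarith
  · have := hp_nonneg x; simp only [hw_def] at hx; linarith
end

section
/- Every L-periodic C² pair (p,q) with p ≥ 0 and q ≥ 0 solving the steady system -p'' = (r_u - γ_u(p+q))p + μ(q - p), -q'' = (r_v - γ_v(p+q))q + μ(p - q) on ℝ, which is not identically (0,0), satisfies p(x) > 0 and q(x) > 0 for all x ∈ ℝ. -/
open Set Filter

lemma aux_min (f : ℝ → ℝ) (hf : ContDiff ℝ 2 f) (hnn : ∀ x, 0 ≤ f x) (x₀ : ℝ)
    (h0 : f x₀ = 0) : deriv f x₀ = 0 ∧ 0 ≤ deriv (deriv f) x₀ := by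
  have hmin : IsLocalMin f x₀ := Filter.Eventually.of_forall fun y => by
    rw [h0]; exact hnn y
  have hd1 : deriv f x₀ = 0 := hmin.deriv_eq_zero
  refine ⟨hd1, ?_⟩
  by_contra hc
  push_neg at hc
  have h2 : ContDiff ℝ (1 + 1) f := by rw [one_add_one_eq_two]; exact hf
  have hf1 : ContDiff ℝ 1 (deriv f) := (contDiff_succ_iff_deriv.mp h2).2.2
  have hdd : HasDerivAt (deriv f) (deriv (deriv f) x₀) x₀ :=
    ((hf1.differentiable one_ne_zero) x₀).hasDerivAt
  have hT := hasDerivAt_iff_tendsto_slope.mp hdd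
  have hev : ∀ᶠ t in nhdsWithin x₀ {x₀}ᶜ, slope (deriv f) x₀ t < 0 :=
    hT.eventually (gt_mem_nhds hc)
  rw [eventually_nhdsWithin_iff, Metric.eventually_nhds_iff] at hev
  obtain ⟨δ, hδ, hball⟩ := hev
  have hneg : ∀ t ∈ Ioo x₀ (x₀ + δ/2), deriv f t < 0 := by
    intro t ht
    have htne : t ≠ x₀ := ne_of_gt ht.1
    have hdist : dist t x₀ < δ := by
      rw [Real.dist_eq, abs_of_pos (sub_pos.mpr ht.1)]
      linarith [ht.2]
    have hs := hball hdist htne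
    rw [slope_def_field, hd1, sub_zero] at hs
    have htx : 0 < t - x₀ := sub_pos.mpr ht.1
    have := div_neg_iff.mp hs
    rcases this with ⟨h1, h2⟩ | ⟨h1, h2⟩
    · linarith
    · exact h1
  have hanti : StrictAntiOn f (Icc x₀ (x₀ + δ/2)) := by
    apply strictAntiOn_of_deriv_neg (convex_Icc _ _) (hf.continuous.continuousOn)
    intro t ht
    rw [interior_Icc] at ht
    exact hneg t ht
  have h1 : x₀ ∈ Icc x₀ (x₀ + δ/2) := left_mem_Icc.mpr (by linarith)
  have h2 : x₀ + δ/2 ∈ Icc x₀ (x₀ + δ/2) := right_mem_Icc.mpr (by linarith)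
  have := hanti h1 h2 (by linarith)
  rw [h0] at this
  exact absurd this (not_lt.mpr (hnn _))



/-- positivity of nontrivial nonnegative periodic steady states. -/
theorem stmt6
    (L : ℝ) (hL : 0 < L)
    (ru rv γu γv μ : ℝ → ℝ)
    (hru : ContDiff ℝ (⊤ : ℕ∞) ru) (hrv : ContDiff ℝ (⊤ : ℕ∞) rv)
    (hγu : ContDiff ℝ (⊤ : ℕ∞) γu) (hγv : ContDiff ℝ (⊤ : ℕ∞) γv) (hμ : ContDiff ℝ (⊤ : ℕ∞) μ)
    (hru_per : ∀ x, ru (x + L) = ru x) (hrv_per : ∀ x, rv (x + L) = rv x)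
    (hγu_per : ∀ x, γu (x + L) = γu x) (hγv_per : ∀ x, γv (x + L) = γv x)
    (hμ_per : ∀ x, μ (x + L) = μ x)
    (hγu_pos : ∀ x, 0 < γu x) (hγv_pos : ∀ x, 0 < γv x) (hμ_pos : ∀ x, 0 < μ x)
    -- a nonnegative L-periodic C² steady state
    (p q : ℝ → ℝ)
    (hp : ContDiff ℝ 2 p) (hq : ContDiff ℝ 2 q)
    (hp_per : ∀ x, p (x + L) = p x) (hq_per : ∀ x, q (x + L) = q x)
    (hp_nonneg : ∀ x, 0 ≤ p x) (hq_nonneg : ∀ x, 0 ≤ q x)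
    (hp_eq : ∀ x, -(deriv (deriv p) x)
        = (ru x - γu x * (p x + q x)) * p x + μ x * (q x - p x))
    (hq_eq : ∀ x, -(deriv (deriv q) x)
        = (rv x - γv x * (p x + q x)) * q x + μ x * (p x - q x))
    -- which is not identically (0,0)
    (h_nontrivial : ¬ ∀ x, p x = 0 ∧ q x = 0) :
    ∀ x, 0 < p x ∧ 0 < q x := by
  by_contra hcon
  push_neg at hcon
  -- there is a point where p or q vanishes
  obtain ⟨x₀, hx₀⟩ : ∃ x, p x = 0 ∨ q x = 0 := by
    obtain ⟨x, hx⟩ := hcon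
    rcases le_or_gt (p x) 0 with h | h
    · exact ⟨x, Or.inl (le_antisymm h (hp_nonneg x))⟩
    · exact ⟨x, Or.inr (le_antisymm (hx h) (hq_nonneg x))⟩
  -- at such a point, both vanish, as do their derivatives
  have hkey : p x₀ = 0 ∧ q x₀ = 0 := by
    rcases hx₀ with h0 | h0
    · refine ⟨h0, ?_⟩
      have h2 := (aux_min p hp hp_nonneg x₀ h0).2
      have heq := hp_eq x₀
      rw [h0] at heq
      have heq' : μ x₀ * q x₀ = -(deriv (deriv p) x₀) := by linear_combination -heq
      have hμq : μ x₀ * q x₀ = 0 := le_antisymm (by linarith)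
        (mul_nonneg (hμ_pos x₀).le (hq_nonneg x₀))
      have := (hμ_pos x₀).ne'
      rcases mul_eq_zero.mp hμq with h | h
      · exact absurd h this
      · exact h
    · refine ⟨?_, h0⟩
      have h2 := (aux_min q hq hq_nonneg x₀ h0).2
      have heq := hq_eq x₀
      rw [h0] at heq
      have heq' : μ x₀ * p x₀ = -(deriv (deriv q) x₀) := by linear_combination -heq
      have hμp : μ x₀ * p x₀ = 0 := le_antisymm (by linarith)
        (mul_nonneg (hμ_pos x₀).le (hp_nonneg x₀))
      have := (hμ_pos x₀).ne'
      rcases mul_eq_zero.mp hμp with h | h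
      · exact absurd h this
      · exact h
  obtain ⟨hp0, hq0⟩ := hkey
  have hdp0 : deriv p x₀ = 0 := (aux_min p hp hp_nonneg x₀ hp0).1
  have hdq0 : deriv q x₀ = 0 := (aux_min q hq hq_nonneg x₀ hq0).1
  -- differentiability facts
  have h2p : ContDiff ℝ (1 + 1) p := by rw [one_add_one_eq_two]; exact hp
  have h2q : ContDiff ℝ (1 + 1) q := by rw [one_add_one_eq_two]; exact hq
  have hdp : Differentiable ℝ p := hp.differentiable two_ne_zero
  have hdq : Differentiable ℝ q := hq.differentiable two_ne_zero
  have hp1 : ContDiff ℝ 1 (deriv p) := (contDiff_succ_iff_deriv.mp h2p).2.2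
  have hq1 : ContDiff ℝ 1 (deriv q) := (contDiff_succ_iff_deriv.mp h2q).2.2
  have hdp' : Differentiable ℝ (deriv p) := hp1.differentiable one_ne_zero
  have hdq' : Differentiable ℝ (deriv q) := hq1.differentiable one_ne_zero
  -- the vector (p, q, p', q')
  set f : ℝ → ℝ × ℝ × ℝ × ℝ :=
    fun t => (p t, q t, deriv p t, deriv q t) with hf_def
  set f' : ℝ → ℝ × ℝ × ℝ × ℝ :=
    fun t => (deriv p t, deriv q t, deriv (deriv p) t, deriv (deriv q) t) with hf'_def
  -- bound on the coefficients
  set g : ℝ → ℝ := fun t =>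
    max (max (|ru t - γu t * (p t + q t) - μ t| + |μ t|)
      (|rv t - γv t * (p t + q t) - μ t| + |μ t|)) 1 with hg_def
  have hgc : Continuous g := by
    apply Continuous.max _ continuous_const
    apply Continuous.max
    · exact ((hru.continuous.sub (hγu.continuous.mul
        (hdp.continuous.add hdq.continuous))).sub hμ.continuous).abs.add hμ.continuous.abs
    · exact ((hrv.continuous.sub (hγv.continuous.mul
        (hdp.continuous.add hdq.continuous))).sub hμ.continuous).abs.add hμ.continuous.abs
  obtain ⟨K, hK⟩ := (isCompact_Icc (a := x₀) (b := x₀ + L)).exists_bound_of_continuousOn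
    hgc.continuousOn
  have hK1 : 1 ≤ K := by
    have := hK x₀ (left_mem_Icc.mpr (by linarith))
    rw [Real.norm_eq_abs] at this
    have h1 : 1 ≤ g x₀ := le_max_right _ _
    calc (1:ℝ) ≤ g x₀ := h1
    _ ≤ |g x₀| := le_abs_self _
    _ ≤ K := this
  -- the Gronwall estimate on [x₀, x₀ + L]
  have hzero : ∀ t ∈ Icc x₀ (x₀ + L), f t = 0 := by
    have hfc : ContinuousOn f (Icc x₀ (x₀ + L)) := by
      apply Continuous.continuousOn
      exact (hdp.continuous.prodMk (hdq.continuous.prodMk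
        ((hdp'.continuous).prodMk (hdq'.continuous))))
    have hfd : ∀ t ∈ Ico x₀ (x₀ + L), HasDerivWithinAt f (f' t) (Ici t) t := by
      intro t _
      exact (((hdp t).hasDerivAt).prodMk (((hdq t).hasDerivAt).prodMk
        (((hdp' t).hasDerivAt).prodMk ((hdq' t).hasDerivAt)))).hasDerivWithinAt
    have hfa : ‖f x₀‖ ≤ 0 := by
      simp [hf_def, hp0, hq0, hdp0, hdq0, Prod.norm_def]
    have hbound : ∀ t ∈ Ico x₀ (x₀ + L), ‖f' t‖ ≤ K * ‖f t‖ + 0 := by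
      intro t ht
      have htK : g t ≤ K := by
        have := hK t (Ico_subset_Icc_self ht)
        rw [Real.norm_eq_abs] at this
        exact le_trans (le_abs_self _) this
      have hA : ‖p t‖ ≤ ‖f t‖ := norm_fst_le (f t)
      have hB : ‖q t‖ ≤ ‖f t‖ := le_trans (norm_fst_le (f t).2) (norm_snd_le (f t))
      have hC : ‖deriv p t‖ ≤ ‖f t‖ :=
        le_trans (le_trans (norm_fst_le (f t).2.2) (norm_snd_le (f t).2)) (norm_snd_le (f t))
      have hD : ‖deriv q t‖ ≤ ‖f t‖ :=
        le_trans (le_trans (norm_snd_le (f t).2.2) (norm_snd_le (f t).2)) (norm_snd_le (f t))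
      have hfn : (0:ℝ) ≤ ‖f t‖ := norm_nonneg _
      have hKf : ‖f t‖ ≤ K * ‖f t‖ := le_mul_of_one_le_left hfn hK1
      have hg1 : |ru t - γu t * (p t + q t) - μ t| + |μ t| ≤ K :=
        le_trans (le_trans (le_max_left _ _) (le_max_left _ _)) htK
      have hg2 : |rv t - γv t * (p t + q t) - μ t| + |μ t| ≤ K :=
        le_trans (le_trans (le_max_right _ _) (le_max_left _ _)) htK
      have hpp : ‖deriv (deriv p) t‖ ≤ K * ‖f t‖ := by
        have heq : deriv (deriv p) t
            = -((ru t - γu t * (p t + q t) - μ t) * p t + μ t * q t) := by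
          linear_combination -(hp_eq t)
        rw [Real.norm_eq_abs, heq, abs_neg]
        calc |(ru t - γu t * (p t + q t) - μ t) * p t + μ t * q t|
            ≤ |(ru t - γu t * (p t + q t) - μ t) * p t| + |μ t * q t| := abs_add_le _ _
          _ = |ru t - γu t * (p t + q t) - μ t| * |p t| + |μ t| * |q t| := by
              rw [abs_mul, abs_mul]
          _ ≤ |ru t - γu t * (p t + q t) - μ t| * ‖f t‖ + |μ t| * ‖f t‖ := by
              have := abs_nonneg (ru t - γu t * (p t + q t) - μ t)
              have := abs_nonneg (μ t)
              have hA' : |p t| ≤ ‖f t‖ := by rwa [Real.norm_eq_abs] at hA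
              have hB' : |q t| ≤ ‖f t‖ := by rwa [Real.norm_eq_abs] at hB
              nlinarith
          _ = (|ru t - γu t * (p t + q t) - μ t| + |μ t|) * ‖f t‖ := by ring
          _ ≤ K * ‖f t‖ := by nlinarith
      have hqq : ‖deriv (deriv q) t‖ ≤ K * ‖f t‖ := by
        have heq : deriv (deriv q) t
            = -((rv t - γv t * (p t + q t) - μ t) * q t + μ t * p t) := by
          linear_combination -(hq_eq t)
        rw [Real.norm_eq_abs, heq, abs_neg]
        calc |(rv t - γv t * (p t + q t) - μ t) * q t + μ t * p t|
            ≤ |(rv t - γv t * (p t + q t) - μ t) * q t| + |μ t * p t| := abs_add_le _ _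
          _ = |rv t - γv t * (p t + q t) - μ t| * |q t| + |μ t| * |p t| := by
              rw [abs_mul, abs_mul]
          _ ≤ |rv t - γv t * (p t + q t) - μ t| * ‖f t‖ + |μ t| * ‖f t‖ := by
              have := abs_nonneg (rv t - γv t * (p t + q t) - μ t)
              have := abs_nonneg (μ t)
              have hA' : |p t| ≤ ‖f t‖ := by rwa [Real.norm_eq_abs] at hA
              have hB' : |q t| ≤ ‖f t‖ := by rwa [Real.norm_eq_abs] at hB
              nlinarith
          _ = (|rv t - γv t * (p t + q t) - μ t| + |μ t|) * ‖f t‖ := by ring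
          _ ≤ K * ‖f t‖ := by nlinarith
      rw [add_zero]
      have : ‖f' t‖ = max ‖deriv p t‖ (max ‖deriv q t‖
          (max ‖deriv (deriv p) t‖ ‖deriv (deriv q) t‖)) := by
        simp [hf'_def, Prod.norm_def]
      rw [this]
      exact max_le (le_trans hC hKf) (max_le (le_trans hD hKf) (max_le hpp hqq))
    intro t ht
    have := norm_le_gronwallBound_of_norm_deriv_right_le hfc hfd hfa hbound t ht
    rw [gronwallBound_ε0_δ0] at this
    exact norm_le_zero_iff.mp this
  -- conclude p = q = 0 everywhere via periodicity
  apply h_nontrivial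
  intro x
  have hpper : Function.Periodic p L := hp_per
  have hqper : Function.Periodic q L := hq_per
  obtain ⟨y, hy, hxy⟩ := hpper.exists_mem_Ico hL x x₀
  obtain ⟨z, hz, hxz⟩ := hqper.exists_mem_Ico hL x x₀
  have hy' := hzero y (Ico_subset_Icc_self hy)
  have hz' := hzero z (Ico_subset_Icc_self hz)
  constructor
  · rw [hxy]; exact congrArg Prod.fst hy'
  · rw [hxz]; exact congrArg (fun v => v.2.1) hz'
end

section
/- For a₀ > 0 and ε > 0, let λ₁^ε be the infimum, over all nonzero pairs w = (w₁,w₂) of H¹ functions on (-a₀,a₀)×(0,L) that vanish at s = ±a₀ and are L-periodic in x, of the Rayleigh quotient [∫∫ (|∂_x w|² + 2 ∂_x w · ∂_s w + (1+ε)|∂_s w|² - w · A(x)w) ds dx] / [∫∫ |w|² ds dx]. Then λ₁^ε ≤ λ₁ + 5(1+ε)/(2a₀²). -/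
open Set MeasureTheory

noncomputable def pds (u : ℝ → ℝ → ℝ) (s x : ℝ) : ℝ := deriv (fun s' => u s' x) s
noncomputable def pdx (u : ℝ → ℝ → ℝ) (s x : ℝ) : ℝ := deriv (u s) x

/-- the Rayleigh-quotient bound `λ₁^ε ≤ λ₁ + 5(1+ε)/(2a₀²)`. -/
theorem stmt11
    (L : ℝ) (hL : 0 < L)
    (ru rv μ : ℝ → ℝ)
    (hru : ContDiff ℝ (⊤ : ℕ∞) ru) (hrv : ContDiff ℝ (⊤ : ℕ∞) rv) (hμ : ContDiff ℝ (⊤ : ℕ∞) μ)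
    (hru_per : ∀ x, ru (x + L) = ru x) (hrv_per : ∀ x, rv (x + L) = rv x)
    (hμ_per : ∀ x, μ (x + L) = μ x)
    (hμ_pos : ∀ x, 0 < μ x)
    -- principal periodic eigenpair for `-d²/dx² - A(x)`
    (lam1 : ℝ) (φ ψ : ℝ → ℝ)
    (hφ : ContDiff ℝ 2 φ) (hψ : ContDiff ℝ 2 ψ)
    (hφ_pos : ∀ x, 0 < φ x) (hψ_pos : ∀ x, 0 < ψ x)
    (hφ_per : ∀ x, φ (x + L) = φ x) (hψ_per : ∀ x, ψ (x + L) = ψ x)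
    (hφ_eq : ∀ x, -(deriv (deriv φ) x) - (ru x - μ x) * φ x - μ x * ψ x = lam1 * φ x)
    (hψ_eq : ∀ x, -(deriv (deriv ψ) x) - (rv x - μ x) * ψ x - μ x * φ x = lam1 * ψ x)
    -- parameters and the principal eigenvalue λ₁^ε, given as the infimum of the
    -- Rayleigh quotient over admissible nonzero test pairs
    (a0 ε : ℝ) (ha0 : 0 < a0) (hε : 0 < ε)
    (lam1eps : ℝ)
    (hglb : IsGLB
      {r : ℝ | ∃ w₁ w₂ : ℝ → ℝ → ℝ,
        ContDiff ℝ 1 (Function.uncurry w₁) ∧ ContDiff ℝ 1 (Function.uncurry w₂) ∧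
        (∀ x : ℝ, w₁ (-a0) x = 0 ∧ w₁ a0 x = 0 ∧ w₂ (-a0) x = 0 ∧ w₂ a0 x = 0) ∧
        (∀ s x : ℝ, w₁ s (x + L) = w₁ s x ∧ w₂ s (x + L) = w₂ s x) ∧
        0 < (∫ z in (Ioo (-a0) a0 ×ˢ Ioo (0:ℝ) L),
          ((w₁ z.1 z.2) ^ 2 + (w₂ z.1 z.2) ^ 2)) ∧
        r = (∫ z in (Ioo (-a0) a0 ×ˢ Ioo (0:ℝ) L),
              ((pdx w₁ z.1 z.2) ^ 2 + (pdx w₂ z.1 z.2) ^ 2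
                + 2 * (pdx w₁ z.1 z.2 * pds w₁ z.1 z.2 + pdx w₂ z.1 z.2 * pds w₂ z.1 z.2)
                + (1 + ε) * ((pds w₁ z.1 z.2) ^ 2 + (pds w₂ z.1 z.2) ^ 2)
                - ((ru z.2 - μ z.2) * (w₁ z.1 z.2) ^ 2
                    + 2 * μ z.2 * w₁ z.1 z.2 * w₂ z.1 z.2
                    + (rv z.2 - μ z.2) * (w₂ z.1 z.2) ^ 2)))
            / (∫ z in (Ioo (-a0) a0 ×ˢ Ioo (0:ℝ) L),
              ((w₁ z.1 z.2) ^ 2 + (w₂ z.1 z.2) ^ 2))}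
      lam1eps) :
    lam1eps ≤ lam1 + 5 * (1 + ε) / (2 * a0 ^ 2) := by
  classical
  -- basic regularity facts
  have hφ1 : ContDiff ℝ 1 (deriv φ) := by simpa using hφ.iterate_deriv' 1 1
  have hψ1 : ContDiff ℝ 1 (deriv ψ) := by simpa using hψ.iterate_deriv' 1 1
  have hφdiff : Differentiable ℝ φ := hφ.differentiable (by norm_num)
  have hψdiff : Differentiable ℝ ψ := hψ.differentiable (by norm_num)
  have cφ : Continuous φ := hφ.continuous
  have cψ : Continuous ψ := hψ.continuous
  have cdφ : Continuous (deriv φ) := hφ1.continuous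
  have cdψ : Continuous (deriv ψ) := hψ1.continuous
  have cddφ : Continuous (deriv (deriv φ)) := hφ1.continuous_deriv le_rfl
  have cddψ : Continuous (deriv (deriv ψ)) := hψ1.continuous_deriv le_rfl
  have cru : Continuous ru := hru.continuous
  have crv : Continuous rv := hrv.continuous
  have cμ : Continuous μ := hμ.continuous
  -- periodicity of derivatives
  have hder_per : ∀ (f : ℝ → ℝ), (∀ x, f (x + L) = f x) → ∀ x, deriv f (x + L) = deriv f x := by
    intro f hper x
    have hfun : (fun y => f (y + L)) = f := funext hper
    calc deriv f (x + L) = deriv (fun y => f (y + L)) x := (deriv_comp_add_const f L x).symm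
      _ = deriv f x := by rw [hfun]
  -- integration by parts (FTC) for a periodic C² function
  have ibp : ∀ (f : ℝ → ℝ), ContDiff ℝ 2 f → (∀ x, f (x + L) = f x) →
      ∫ x in (0:ℝ)..L, (deriv f x * deriv f x + f x * deriv (deriv f) x) = 0 := by
    intro f hf hper
    have hf1 : ContDiff ℝ 1 (deriv f) := by simpa using hf.iterate_deriv' 1 1
    have hfd : Differentiable ℝ f := hf.differentiable (by norm_num)
    have hfd1 : Differentiable ℝ (deriv f) := hf1.differentiable (by norm_num)
    have hderiv : ∀ x ∈ uIcc (0:ℝ) L,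
        HasDerivAt (fun y => f y * deriv f y)
          (deriv f x * deriv f x + f x * deriv (deriv f) x) x := by
      intro x _
      exact (hfd x).hasDerivAt.mul (hfd1 x).hasDerivAt
    have hint : IntervalIntegrable
        (fun x => deriv f x * deriv f x + f x * deriv (deriv f) x) volume 0 L := by
      apply Continuous.intervalIntegrable
      exact ((hf1.continuous.mul hf1.continuous).add
        (hf.continuous.mul (hf1.continuous_deriv le_rfl)))
    rw [intervalIntegral.integral_eq_sub_of_hasDerivAt hderiv hint]
    have h1 : f L = f 0 := by simpa using hper 0
    have h2 : deriv f L = deriv f 0 := by simpa using hder_per f hper 0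
    rw [h1, h2]; ring
  -- the key x-integral identity coming from the eigenvalue equations
  set J : ℝ := ∫ x in (0:ℝ)..L, (φ x ^ 2 + ψ x ^ 2) with hJ
  have hJpos : 0 < J := by
    apply intervalIntegral.intervalIntegral_pos_of_pos_on
    · exact Continuous.intervalIntegrable (by fun_prop) 0 L
    · intro x _
      have := hφ_pos x
      positivity
    · exact hL
  have hQkey : (∫ x in (0:ℝ)..L, ((deriv φ x) ^ 2 + (deriv ψ x) ^ 2
      - ((ru x - μ x) * φ x ^ 2 + 2 * μ x * φ x * ψ x + (rv x - μ x) * ψ x ^ 2)))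
      = lam1 * J := by
    have hEq : EqOn
        (fun x => (deriv φ x) ^ 2 + (deriv ψ x) ^ 2
          - ((ru x - μ x) * φ x ^ 2 + 2 * μ x * φ x * ψ x + (rv x - μ x) * ψ x ^ 2))
        (fun x => (deriv φ x * deriv φ x + φ x * deriv (deriv φ) x)
          + ((deriv ψ x * deriv ψ x + ψ x * deriv (deriv ψ) x)
            + lam1 * (φ x ^ 2 + ψ x ^ 2))) (uIcc (0:ℝ) L) := by
      intro x _
      have h1 := hφ_eq x
      have h2 := hψ_eq x
      simp only
      linear_combination φ x * h1 + ψ x * h2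
    rw [intervalIntegral.integral_congr hEq]
    have i1 : IntervalIntegrable
        (fun x => deriv φ x * deriv φ x + φ x * deriv (deriv φ) x) volume 0 L :=
      Continuous.intervalIntegrable (by fun_prop) 0 L
    have i2 : IntervalIntegrable
        (fun x => deriv ψ x * deriv ψ x + ψ x * deriv (deriv ψ) x) volume 0 L :=
      Continuous.intervalIntegrable (by fun_prop) 0 L
    have i3 : IntervalIntegrable (fun x => lam1 * (φ x ^ 2 + ψ x ^ 2)) volume 0 L :=
      Continuous.intervalIntegrable (by fun_prop) 0 L
    rw [intervalIntegral.integral_add i1 (i2.add i3), intervalIntegral.integral_add i2 i3,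
      ibp φ hφ hφ_per, ibp ψ hψ hψ_per, intervalIntegral.integral_const_mul]
    rw [hJ]; ring
  -- the elementary s-integrals
  have ha0le : -a0 ≤ a0 := by linarith
  have hI2 : ∫ s in -a0..a0, ((a0 ^ 2 - s ^ 2) ^ 2) = 16 / 15 * a0 ^ 5 := by
    have hd : ∀ s ∈ uIcc (-a0) a0,
        HasDerivAt (fun t : ℝ => a0 ^ 4 * t - 2 / 3 * a0 ^ 2 * t ^ 3 + t ^ 5 / 5)
          ((a0 ^ 2 - s ^ 2) ^ 2) s := by
      intro s _
      have h : HasDerivAt (fun t : ℝ => a0 ^ 4 * t - 2 / 3 * a0 ^ 2 * t ^ 3 + t ^ 5 / 5)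
          (a0 ^ 4 * 1 - 2 / 3 * a0 ^ 2 * ((3:ℕ) * s ^ 2) + ((5:ℕ) * s ^ 4) / 5) s :=
        (((hasDerivAt_id' s).const_mul (a0 ^ 4)).sub
          ((hasDerivAt_pow 3 s).const_mul (2 / 3 * a0 ^ 2))).add
          ((hasDerivAt_pow 5 s).div_const 5)
      convert h using 1; push_cast; ring
    rw [intervalIntegral.integral_eq_sub_of_hasDerivAt hd
      (Continuous.intervalIntegrable (by fun_prop) _ _)]
    ring
  have hIodd : ∫ s in -a0..a0, ((a0 ^ 2 - s ^ 2) * (-(2 * s))) = 0 := by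
    have hd : ∀ s ∈ uIcc (-a0) a0,
        HasDerivAt (fun t : ℝ => -a0 ^ 2 * t ^ 2 + t ^ 4 / 2)
          ((a0 ^ 2 - s ^ 2) * (-(2 * s))) s := by
      intro s _
      have h : HasDerivAt (fun t : ℝ => -a0 ^ 2 * t ^ 2 + t ^ 4 / 2)
          (-a0 ^ 2 * ((2:ℕ) * s ^ 1) + ((4:ℕ) * s ^ 3) / 2) s :=
        ((hasDerivAt_pow 2 s).const_mul (-a0 ^ 2)).add ((hasDerivAt_pow 4 s).div_const 2)
      convert h using 1; push_cast; ring
    rw [intervalIntegral.integral_eq_sub_of_hasDerivAt hd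
      (Continuous.intervalIntegrable (by fun_prop) _ _)]
    ring
  have hI1 : ∫ s in -a0..a0, ((1 + ε) * (2 * s) ^ 2) = (1 + ε) * (8 / 3 * a0 ^ 3) := by
    have hd : ∀ s ∈ uIcc (-a0) a0,
        HasDerivAt (fun t : ℝ => (1 + ε) * (4 / 3 * t ^ 3)) ((1 + ε) * (2 * s) ^ 2) s := by
      intro s _
      have h : HasDerivAt (fun t : ℝ => (1 + ε) * (4 / 3 * t ^ 3))
          ((1 + ε) * (4 / 3 * ((3:ℕ) * s ^ 2))) s :=
        (((hasDerivAt_pow 3 s).const_mul (4 / 3)).const_mul (1 + ε))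
      convert h using 1; push_cast; ring
    rw [intervalIntegral.integral_eq_sub_of_hasDerivAt hd
      (Continuous.intervalIntegrable (by fun_prop) _ _)]
    ring
  -- conversion between set integrals on Ioo and interval integrals
  have hset : ∀ (f : ℝ → ℝ) (a b : ℝ), a ≤ b → ∫ x in Ioo a b, f x = ∫ x in a..b, f x := by
    intro f a b hab
    rw [intervalIntegral.integral_of_le hab, integral_Ioc_eq_integral_Ioo]
  -- integrability on the intervals
  have hiA : ∀ (f : ℝ → ℝ), Continuous f → IntegrableOn f (Ioo (-a0) a0) := fun f hf =>
    ((hf.intervalIntegrable (-a0) a0).1).mono_set Ioo_subset_Ioc_self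
  have hiB : ∀ (f : ℝ → ℝ), Continuous f → IntegrableOn f (Ioo (0:ℝ) L) := fun f hf =>
    ((hf.intervalIntegrable 0 L).1).mono_set Ioo_subset_Ioc_self
  -- product integral splitting
  have hprod : ∀ (f g : ℝ → ℝ), Continuous f → Continuous g →
      ∫ z in (Ioo (-a0) a0 ×ˢ Ioo (0:ℝ) L), f z.1 * g z.2
        = (∫ s in Ioo (-a0) a0, f s) * (∫ x in Ioo (0:ℝ) L, g x) := by
    intro f g hf hg
    rw [Measure.volume_eq_prod, ← Measure.prod_restrict]
    exact integral_prod_mul f g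
  -- the test functions
  set w₁ : ℝ → ℝ → ℝ := fun s x => (a0 ^ 2 - s ^ 2) * φ x with hw₁
  set w₂ : ℝ → ℝ → ℝ := fun s x => (a0 ^ 2 - s ^ 2) * ψ x with hw₂
  have hpds1 : ∀ s x, pds w₁ s x = -(2 * s) * φ x := by
    intro s x
    have h : HasDerivAt (fun s' : ℝ => (a0 ^ 2 - s' ^ 2) * φ x) (-(2 * s) * φ x) s := by
      have h' : HasDerivAt (fun s' : ℝ => (a0 ^ 2 - s' ^ 2))
          ((0:ℝ) - (2:ℕ) * s ^ 1) s := (hasDerivAt_const s (a0 ^ 2)).sub (hasDerivAt_pow 2 s)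
      have := h'.mul_const (φ x)
      exact this.congr_deriv (by push_cast; ring)
    simpa [pds, hw₁] using h.deriv
  have hpds2 : ∀ s x, pds w₂ s x = -(2 * s) * ψ x := by
    intro s x
    have h : HasDerivAt (fun s' : ℝ => (a0 ^ 2 - s' ^ 2) * ψ x) (-(2 * s) * ψ x) s := by
      have h' : HasDerivAt (fun s' : ℝ => (a0 ^ 2 - s' ^ 2))
          ((0:ℝ) - (2:ℕ) * s ^ 1) s := (hasDerivAt_const s (a0 ^ 2)).sub (hasDerivAt_pow 2 s)
      have := h'.mul_const (ψ x)
      exact this.congr_deriv (by push_cast; ring)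
    simpa [pds, hw₂] using h.deriv
  have hpdx1 : ∀ s x, pdx w₁ s x = (a0 ^ 2 - s ^ 2) * deriv φ x := by
    intro s x
    simp only [pdx, hw₁]
    exact deriv_const_mul _ (hφdiff x)
  have hpdx2 : ∀ s x, pdx w₂ s x = (a0 ^ 2 - s ^ 2) * deriv ψ x := by
    intro s x
    simp only [pdx, hw₂]
    exact deriv_const_mul _ (hψdiff x)
  -- the denominator
  have hden : (∫ z in (Ioo (-a0) a0 ×ˢ Ioo (0:ℝ) L),
      ((w₁ z.1 z.2) ^ 2 + (w₂ z.1 z.2) ^ 2)) = (16 / 15 * a0 ^ 5) * J := by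
    have h1 : (∫ z in (Ioo (-a0) a0 ×ˢ Ioo (0:ℝ) L),
        ((w₁ z.1 z.2) ^ 2 + (w₂ z.1 z.2) ^ 2))
        = ∫ z in (Ioo (-a0) a0 ×ˢ Ioo (0:ℝ) L),
            (fun s => (a0 ^ 2 - s ^ 2) ^ 2) z.1 * (fun x => φ x ^ 2 + ψ x ^ 2) z.2 := by
      congr 1
      funext z
      simp only [hw₁, hw₂]
      ring
    rw [h1, hprod (fun s => (a0 ^ 2 - s ^ 2) ^ 2) (fun x => φ x ^ 2 + ψ x ^ 2)
        (by fun_prop) (by fun_prop), hset _ (-a0) a0 ha0le,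
      hset _ 0 L hL.le, hI2, hJ]
  have hJne : J ≠ 0 := hJpos.ne'
  have ha0ne : a0 ≠ 0 := ha0.ne'
  -- the numerator
  have hnum : (∫ z in (Ioo (-a0) a0 ×ˢ Ioo (0:ℝ) L),
      ((pdx w₁ z.1 z.2) ^ 2 + (pdx w₂ z.1 z.2) ^ 2
        + 2 * (pdx w₁ z.1 z.2 * pds w₁ z.1 z.2 + pdx w₂ z.1 z.2 * pds w₂ z.1 z.2)
        + (1 + ε) * ((pds w₁ z.1 z.2) ^ 2 + (pds w₂ z.1 z.2) ^ 2)
        - ((ru z.2 - μ z.2) * (w₁ z.1 z.2) ^ 2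
            + 2 * μ z.2 * w₁ z.1 z.2 * w₂ z.1 z.2
            + (rv z.2 - μ z.2) * (w₂ z.1 z.2) ^ 2)))
      = (16 / 15 * a0 ^ 5) * (lam1 * J) + ((1 + ε) * (8 / 3 * a0 ^ 3)) * J := by
    have h1 : (∫ z in (Ioo (-a0) a0 ×ˢ Ioo (0:ℝ) L),
        ((pdx w₁ z.1 z.2) ^ 2 + (pdx w₂ z.1 z.2) ^ 2
          + 2 * (pdx w₁ z.1 z.2 * pds w₁ z.1 z.2 + pdx w₂ z.1 z.2 * pds w₂ z.1 z.2)
          + (1 + ε) * ((pds w₁ z.1 z.2) ^ 2 + (pds w₂ z.1 z.2) ^ 2)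
          - ((ru z.2 - μ z.2) * (w₁ z.1 z.2) ^ 2
              + 2 * μ z.2 * w₁ z.1 z.2 * w₂ z.1 z.2
              + (rv z.2 - μ z.2) * (w₂ z.1 z.2) ^ 2)))
        = ∫ z in (Ioo (-a0) a0 ×ˢ Ioo (0:ℝ) L),
            ((fun s => (a0 ^ 2 - s ^ 2) ^ 2) z.1 *
              (fun x => (deriv φ x) ^ 2 + (deriv ψ x) ^ 2
                - ((ru x - μ x) * φ x ^ 2 + 2 * μ x * φ x * ψ x
                  + (rv x - μ x) * ψ x ^ 2)) z.2
            + (fun s => (a0 ^ 2 - s ^ 2) * (-(2 * s))) z.1 *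
              (fun x => 2 * (deriv φ x * φ x + deriv ψ x * ψ x)) z.2
            + (fun s => (1 + ε) * (2 * s) ^ 2) z.1 *
              (fun x => φ x ^ 2 + ψ x ^ 2) z.2) := by
      congr 1
      funext z
      simp only [hpds1, hpds2, hpdx1, hpdx2]
      simp only [hw₁, hw₂]
      ring
    rw [h1, Measure.volume_eq_prod, ← Measure.prod_restrict]
    have i1 : Integrable (fun z : ℝ × ℝ =>
        (fun s => (a0 ^ 2 - s ^ 2) ^ 2) z.1 *
          (fun x => (deriv φ x) ^ 2 + (deriv ψ x) ^ 2
            - ((ru x - μ x) * φ x ^ 2 + 2 * μ x * φ x * ψ x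
              + (rv x - μ x) * ψ x ^ 2)) z.2)
        ((volume.restrict (Ioo (-a0) a0)).prod (volume.restrict (Ioo (0:ℝ) L))) :=
      (hiA (fun s => (a0 ^ 2 - s ^ 2) ^ 2) (by fun_prop)).mul_prod
        (hiB (fun x => (deriv φ x) ^ 2 + (deriv ψ x) ^ 2
          - ((ru x - μ x) * φ x ^ 2 + 2 * μ x * φ x * ψ x
            + (rv x - μ x) * ψ x ^ 2)) (by fun_prop))
    have i2 : Integrable (fun z : ℝ × ℝ =>
        (fun s => (a0 ^ 2 - s ^ 2) * (-(2 * s))) z.1 *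
          (fun x => 2 * (deriv φ x * φ x + deriv ψ x * ψ x)) z.2)
        ((volume.restrict (Ioo (-a0) a0)).prod (volume.restrict (Ioo (0:ℝ) L))) :=
      (hiA (fun s => (a0 ^ 2 - s ^ 2) * (-(2 * s))) (by fun_prop)).mul_prod
        (hiB (fun x => 2 * (deriv φ x * φ x + deriv ψ x * ψ x)) (by fun_prop))
    have i3 : Integrable (fun z : ℝ × ℝ =>
        (fun s => (1 + ε) * (2 * s) ^ 2) z.1 * (fun x => φ x ^ 2 + ψ x ^ 2) z.2)
        ((volume.restrict (Ioo (-a0) a0)).prod (volume.restrict (Ioo (0:ℝ) L))) :=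
      (hiA (fun s => (1 + ε) * (2 * s) ^ 2) (by fun_prop)).mul_prod
        (hiB (fun x => φ x ^ 2 + ψ x ^ 2) (by fun_prop))
    have i12 : Integrable (fun z : ℝ × ℝ =>
        (fun s => (a0 ^ 2 - s ^ 2) ^ 2) z.1 *
          (fun x => (deriv φ x) ^ 2 + (deriv ψ x) ^ 2
            - ((ru x - μ x) * φ x ^ 2 + 2 * μ x * φ x * ψ x
              + (rv x - μ x) * ψ x ^ 2)) z.2
        + (fun s => (a0 ^ 2 - s ^ 2) * (-(2 * s))) z.1 *
          (fun x => 2 * (deriv φ x * φ x + deriv ψ x * ψ x)) z.2)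
        ((volume.restrict (Ioo (-a0) a0)).prod (volume.restrict (Ioo (0:ℝ) L))) := i1.add i2
    rw [integral_add i12 i3, integral_add i1 i2,
      integral_prod_mul (fun s => (a0 ^ 2 - s ^ 2) ^ 2)
        (fun x => (deriv φ x) ^ 2 + (deriv ψ x) ^ 2
          - ((ru x - μ x) * φ x ^ 2 + 2 * μ x * φ x * ψ x + (rv x - μ x) * ψ x ^ 2)),
      integral_prod_mul (fun s => (a0 ^ 2 - s ^ 2) * (-(2 * s)))
        (fun x => 2 * (deriv φ x * φ x + deriv ψ x * ψ x)),
      integral_prod_mul (fun s => (1 + ε) * (2 * s) ^ 2)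
        (fun x => φ x ^ 2 + ψ x ^ 2),
      hset _ (-a0) a0 ha0le, hset _ (-a0) a0 ha0le, hset _ (-a0) a0 ha0le,
      hset _ 0 L hL.le, hset _ 0 L hL.le, hset _ 0 L hL.le,
      hI2, hIodd, hI1, hQkey, ← hJ]
    ring
  -- membership of the explicit Rayleigh quotient in the admissible set
  have hmem : lam1 + 5 * (1 + ε) / (2 * a0 ^ 2) ∈
      {r : ℝ | ∃ w₁ w₂ : ℝ → ℝ → ℝ,
        ContDiff ℝ 1 (Function.uncurry w₁) ∧ ContDiff ℝ 1 (Function.uncurry w₂) ∧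
        (∀ x : ℝ, w₁ (-a0) x = 0 ∧ w₁ a0 x = 0 ∧ w₂ (-a0) x = 0 ∧ w₂ a0 x = 0) ∧
        (∀ s x : ℝ, w₁ s (x + L) = w₁ s x ∧ w₂ s (x + L) = w₂ s x) ∧
        0 < (∫ z in (Ioo (-a0) a0 ×ˢ Ioo (0:ℝ) L),
          ((w₁ z.1 z.2) ^ 2 + (w₂ z.1 z.2) ^ 2)) ∧
        r = (∫ z in (Ioo (-a0) a0 ×ˢ Ioo (0:ℝ) L),
              ((pdx w₁ z.1 z.2) ^ 2 + (pdx w₂ z.1 z.2) ^ 2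
                + 2 * (pdx w₁ z.1 z.2 * pds w₁ z.1 z.2 + pdx w₂ z.1 z.2 * pds w₂ z.1 z.2)
                + (1 + ε) * ((pds w₁ z.1 z.2) ^ 2 + (pds w₂ z.1 z.2) ^ 2)
                - ((ru z.2 - μ z.2) * (w₁ z.1 z.2) ^ 2
                    + 2 * μ z.2 * w₁ z.1 z.2 * w₂ z.1 z.2
                    + (rv z.2 - μ z.2) * (w₂ z.1 z.2) ^ 2)))
            / (∫ z in (Ioo (-a0) a0 ×ˢ Ioo (0:ℝ) L),
              ((w₁ z.1 z.2) ^ 2 + (w₂ z.1 z.2) ^ 2))} := by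
    refine ⟨w₁, w₂, ?_, ?_, ?_, ?_, ?_, ?_⟩
    · rw [hw₁]
      exact ContDiff.mul (by fun_prop) ((hφ.of_le (by norm_num)).comp contDiff_snd)
    · rw [hw₂]
      exact ContDiff.mul (by fun_prop) ((hψ.of_le (by norm_num)).comp contDiff_snd)
    · intro x
      refine ⟨?_, ?_, ?_, ?_⟩ <;> simp [hw₁, hw₂, neg_sq]
    · intro s x
      constructor
      · simp only [hw₁]; rw [hφ_per]
      · simp only [hw₂]; rw [hψ_per]
    · rw [hden]
      exact mul_pos (by positivity) hJpos
    · rw [hnum, hden]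
      field_simp
      ring
  exact hglb.1 hmem
end
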